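/- arXiv:1404.2822 — 5 statements merged into one kernel-verified Lean document; each statement's English description precedes it below -/
import Mathlib

section
/- If $k \geq 1$ is an integer and $\check{H} = 1 - \frac{1}{2k}$, then there exists a constant $C' > 0$ (depending on $\check{H}$ and $k$) such that $\sum_{|j| < \ell} |r_{\check{H}}(j)|^k \leq C' \log \ell$ for all integers $\ell \geq 2$. -/
/-- Correlation function of fractional Gaussian noise with Hurst parameter `H`. -/
noncomputable def fgnCorr (H : ℝ) (j : ℤ) : ℝ :=
  (|(j : ℝ) + 1| ^ (2 * H) - 2 * |(j : ℝ)| ^ (2 * H) + |(j : ℝ) - 1| ^ (2 * H)) / 2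

open Real in
/-- Second difference bound via the mean value theorem and Bernoulli. -/
lemma secondDiff_bound {p q : ℝ} (hq : q = p - 1) (hq0 : 0 ≤ q) (hq1 : q ≤ 1)
    {a : ℝ} (ha : 1 ≤ a) :
    0 ≤ (a+2) ^ p - 2 * (a+1) ^ p + a ^ p ∧
      (a+2) ^ p - 2 * (a+1) ^ p + a ^ p ≤ p * q * a ^ (q - 1) := by
  have hp1 : 1 ≤ p := by linarith
  have ha0 : (0:ℝ) < a := by linarith
  set f : ℝ → ℝ := fun x => (x+1) ^ p - x ^ p with hf
  set f' : ℝ → ℝ := fun x => p * (x+1) ^ (p-1) - p * x ^ (p-1) with hf'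
  have hder : ∀ x ∈ Set.Ioo a (a+1), HasDerivAt f (f' x) x := by
    intro x hx
    have hx0 : (0:ℝ) < x := lt_trans ha0 hx.1
    have h1 : HasDerivAt (fun y : ℝ => (y+1) ^ p) (1 * p * (x+1) ^ (p-1)) x :=
      HasDerivAt.rpow_const ((hasDerivAt_id x).add_const 1) (Or.inl (by positivity))
    have h2 : HasDerivAt (fun y : ℝ => y ^ p) (p * x ^ (p-1)) x :=
      Real.hasDerivAt_rpow_const (Or.inl hx0.ne')
    have h3 := h1.sub h2; rw [one_mul] at h3; exact h3
  have hcont : ContinuousOn f (Set.Icc a (a+1)) := by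
    intro x hx
    have hx0 : (0:ℝ) < x := lt_of_lt_of_le ha0 hx.1
    have h1 : HasDerivAt f (f' x) x := by
      have h1 : HasDerivAt (fun y : ℝ => (y+1) ^ p) (1 * p * (x+1) ^ (p-1)) x :=
        HasDerivAt.rpow_const ((hasDerivAt_id x).add_const 1) (Or.inl (by positivity))
      have h2 : HasDerivAt (fun y : ℝ => y ^ p) (p * x ^ (p-1)) x :=
        Real.hasDerivAt_rpow_const (Or.inl hx0.ne')
      have h3 := h1.sub h2; rw [one_mul] at h3; exact h3
    exact h1.continuousAt.continuousWithinAt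
  obtain ⟨c, hc, hceq⟩ := exists_hasDerivAt_eq_slope f f' (by linarith : a < a + 1) hcont hder
  have hca : a ≤ c := hc.1.le
  have hc0 : (0:ℝ) < c := lt_of_lt_of_le ha0 hca
  have hkey : f (a+1) - f a = f' c := by
    rw [hceq]; field_simp; ring
  have hexp : (a+2) ^ p - 2 * (a+1) ^ p + a ^ p = f' c := by
    rw [← hkey]; simp only [hf]
    have : a + 1 + 1 = a + 2 := by ring
    rw [this]; ring
  have hfc : f' c = p * (c+1) ^ q - p * c ^ q := by
    simp only [hf', hq]
  rw [hexp, hfc]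
  constructor
  · have : c ^ q ≤ (c+1) ^ q := Real.rpow_le_rpow hc0.le (by linarith) hq0
    nlinarith [this, hp1]
  · -- p * (c+1)^q - p * c^q ≤ p * q * a^(q-1)
    have hstep : (c+1) ^ q ≤ c ^ q + q * c ^ (q-1) := by
      have h1 : (c+1 : ℝ) = c * (1 + 1/c) := by field_simp
      rw [h1, Real.mul_rpow hc0.le (by positivity)]
      have h2 : (1 + 1/c) ^ q ≤ 1 + q * (1/c) :=
        rpow_one_add_le_one_add_mul_self (le_trans (by norm_num) (le_of_lt (by positivity : (0:ℝ) < 1/c))) hq0 hq1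
      have h3 : c ^ q * (1 + 1/c) ^ q ≤ c ^ q * (1 + q * (1/c)) := by
        exact mul_le_mul_of_nonneg_left h2 (Real.rpow_nonneg hc0.le q)
      refine h3.trans ?_
      have h4 : c ^ q / c = c ^ (q - 1) := by
        rw [Real.rpow_sub hc0, Real.rpow_one]
      have : c ^ q * (1 + q * (1/c)) = c ^ q + q * (c ^ q / c) := by ring
      rw [this, h4]
    have hmono : c ^ (q-1) ≤ a ^ (q-1) :=
      Real.rpow_le_rpow_of_nonpos ha0 hca (by linarith)
    have hp0 : 0 ≤ p := by linarith
    nlinarith [mul_le_mul_of_nonneg_left hstep hp0,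
      mul_le_mul_of_nonneg_left hmono (mul_nonneg hp0 hq0)]

theorem stmt2 (k : ℕ) (hk : 1 ≤ k) (H : ℝ) (hH : H = 1 - 1 / (2 * (k : ℝ))) :
    ∃ C : ℝ, 0 < C ∧ ∀ ℓ : ℕ, 2 ≤ ℓ →
      ∑ j ∈ Finset.Ioo (-(ℓ : ℤ)) (ℓ : ℤ), |fgnCorr H j| ^ k ≤ C * Real.log ℓ := by
  have hk1 : (1:ℝ) ≤ (k:ℝ) := by exact_mod_cast hk
  have hk0 : (0:ℝ) < (k:ℝ) := by linarith
  set p : ℝ := 2 * H with hp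
  set q : ℝ := p - 1 with hq
  have hpk : p = 2 - 1/(k:ℝ) := by rw [hp, hH]; field_simp
  have hqk : q = 1 - 1/(k:ℝ) := by rw [hq, hpk]; ring
  have hinv0 : 0 < 1/(k:ℝ) := by positivity
  have hinv1 : 1/(k:ℝ) ≤ 1 := by rw [div_le_one hk0]; exact hk1
  have hq0 : 0 ≤ q := by rw [hqk]; linarith
  have hq1 : q ≤ 1 := by rw [hqk]; linarith
  have hp1 : 1 ≤ p := by rw [hpk]; linarith
  have hp2 : p ≤ 2 := by rw [hpk]; linarith
  set A : ℝ := (p * q / 2) ^ k with hA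
  have hpq0 : 0 ≤ p * q / 2 := by positivity
  have hA0 : 0 ≤ A := pow_nonneg hpq0 k
  have hlog2 : 0 < Real.log 2 := Real.log_pos (by norm_num)
  set t : ℤ → ℝ := fun j => |fgnCorr H j| ^ k with ht
  -- term bound for j ≥ 2
  have hterm : ∀ j : ℤ, 2 ≤ j → t j ≤ A * (1/((j:ℝ)-1)) := by
    intro j hj
    have hjr : (2:ℝ) ≤ (j:ℝ) := by exact_mod_cast hj
    set a : ℝ := (j:ℝ) - 1 with ha
    have ha1 : 1 ≤ a := by simp [ha]; linarith
    obtain ⟨h0, h1⟩ := secondDiff_bound hq hq0 hq1 ha1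
    have hval : fgnCorr H j = ((a+2) ^ p - 2 * (a+1) ^ p + a ^ p) / 2 := by
      rw [fgnCorr, ← hp]
      rw [abs_of_nonneg (by linarith : (0:ℝ) ≤ (j:ℝ) + 1),
          abs_of_nonneg (by linarith : (0:ℝ) ≤ (j:ℝ)),
          abs_of_nonneg (by linarith : (0:ℝ) ≤ (j:ℝ) - 1)]
      have e1 : (j:ℝ) + 1 = a + 2 := by rw [ha]; ring
      have e2 : (j:ℝ) = a + 1 := by rw [ha]; ring
      have e3 : (j:ℝ) - 1 = a := by rw [ha]
      rw [e1, e3, e2]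
    have habs : |fgnCorr H j| ≤ (p * q / 2) * a ^ (q - 1) := by
      rw [hval, abs_of_nonneg (by linarith),
        show p * q / 2 * a ^ (q-1) = (p * q * a ^ (q-1)) / 2 by ring]
      exact div_le_div_of_nonneg_right h1 (by norm_num)
    have hpow : t j ≤ ((p * q / 2) * a ^ (q - 1)) ^ k :=
      pow_le_pow_left₀ (abs_nonneg _) habs k
    have ha0 : (0:ℝ) < a := by linarith
    have hrw : ((p * q / 2) * a ^ (q - 1)) ^ k = A * (1/a) := by
      rw [mul_pow, ← hA]
      congr 1
      rw [← Real.rpow_natCast (a ^ (q-1)) k, ← Real.rpow_mul ha0.le]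
      have : (q - 1) * (k:ℝ) = -1 := by rw [hqk]; field_simp; ring
      rw [this, Real.rpow_neg_one, one_div]
    rw [hrw] at hpow
    exact hpow
  -- bounds at 0 and 1
  have hp0ne : p ≠ 0 := by intro h; rw [h] at hp1; linarith
  have ht0 : t 0 ≤ 1 := by
    have h01 : fgnCorr H 0 = 1 := by
      rw [fgnCorr, ← hp]
      norm_num [Real.zero_rpow hp0ne, Real.one_rpow]
    rw [ht]; simp [h01]
  have ht1 : t 1 ≤ 1 := by
    have hv : fgnCorr H 1 = ((2:ℝ) ^ p - 2) / 2 := by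
      rw [fgnCorr, ← hp]
      norm_num [Real.zero_rpow hp0ne, Real.one_rpow]
    have h2l : (2:ℝ) ≤ (2:ℝ) ^ p := by
      calc (2:ℝ) = (2:ℝ) ^ (1:ℝ) := (Real.rpow_one 2).symm
      _ ≤ (2:ℝ) ^ p := Real.rpow_le_rpow_of_exponent_le one_le_two hp1
    have h2u : (2:ℝ) ^ p ≤ 4 := by
      calc (2:ℝ) ^ p ≤ (2:ℝ) ^ (2:ℝ) := Real.rpow_le_rpow_of_exponent_le one_le_two hp2
      _ = 4 := by rw [show (2:ℝ) = ((2:ℕ):ℝ) by norm_num, Real.rpow_natCast]; norm_num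
    have : |fgnCorr H 1| ≤ 1 := by
      rw [hv, abs_of_nonneg (by linarith)]; linarith
    rw [ht]; simpa using pow_le_one₀ (abs_nonneg _) this
  -- evenness
  have heven : ∀ j : ℤ, fgnCorr H (-j) = fgnCorr H j := by
    intro j
    rw [fgnCorr, fgnCorr]
    push_cast
    rw [show -(j:ℝ) + 1 = -((j:ℝ) - 1) by ring, show -(j:ℝ) - 1 = -((j:ℝ) + 1) by ring,
        abs_neg, abs_neg, abs_neg]
    ring
  refine ⟨(3 + 2*A)/Real.log 2 + 2*A, by positivity, ?_⟩
  intro ℓ hℓ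
  have hℓ0 : (0:ℤ) < (ℓ:ℤ) := by exact_mod_cast Nat.lt_of_lt_of_le Nat.zero_lt_two hℓ
  -- split the sum
  have hsplit : Finset.Ioo (-(ℓ:ℤ)) (ℓ:ℤ) = Finset.Ioo (-(ℓ:ℤ)) 0 ∪ Finset.Ico 0 (ℓ:ℤ) := by
    ext x; simp only [Finset.mem_Ioo, Finset.mem_union, Finset.mem_Ico]; omega
  have hdisj : Disjoint (Finset.Ioo (-(ℓ:ℤ)) 0) (Finset.Ico 0 (ℓ:ℤ)) := by
    rw [Finset.disjoint_left]; intro x hx hx'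
    simp only [Finset.mem_Ioo, Finset.mem_Ico] at hx hx'; omega
  have hneg : ∑ j ∈ Finset.Ioo (-(ℓ:ℤ)) 0, t j = ∑ j ∈ Finset.Ioo (0:ℤ) (ℓ:ℤ), t j := by
    refine Finset.sum_nbij' (fun j => -j) (fun j => -j) ?_ ?_ ?_ ?_ ?_
    · intro a haa; simp only [Finset.mem_Ioo] at *; omega
    · intro a haa; simp only [Finset.mem_Ioo] at *; omega
    · intro a _; ring
    · intro a _; ring
    · intro a _; rw [ht]; simp only; rw [heven a]
  have hIco : Finset.Ico (0:ℤ) (ℓ:ℤ) = insert 0 (Finset.Ioo (0:ℤ) (ℓ:ℤ)) :=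
    (Finset.Ioo_insert_left hℓ0).symm
  have hnot : (0:ℤ) ∉ Finset.Ioo (0:ℤ) (ℓ:ℤ) := by simp
  have hstep1 : ∑ j ∈ Finset.Ioo (-(ℓ:ℤ)) (ℓ:ℤ), t j
      = t 0 + 2 * ∑ j ∈ Finset.Ioo (0:ℤ) (ℓ:ℤ), t j := by
    rw [hsplit, Finset.sum_union hdisj, hneg, hIco, Finset.sum_insert hnot]; ring
  -- convert to nat sum
  have hnat : ∑ j ∈ Finset.Ioo (0:ℤ) (ℓ:ℤ), t j = ∑ m ∈ Finset.Ioo 0 ℓ, t (m:ℤ) := by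
    refine Finset.sum_nbij' (fun j => j.toNat) (fun m => (m:ℤ)) ?_ ?_ ?_ ?_ ?_
    · intro a haa; simp only [Finset.mem_Ioo] at *; omega
    · intro a haa; simp only [Finset.mem_Ioo] at *; omega
    · intro a haa; show ((a.toNat : ℤ)) = a
      simp only [Finset.mem_Ioo] at haa; omega
    · intro a _; show ((a:ℤ)).toNat = a; simp
    · intro a haa; simp only [Finset.mem_Ioo] at haa
      show t a = t ((a.toNat : ℤ)); congr 1; omega
  have hIooN : Finset.Ioo 0 ℓ = insert 1 (Finset.Ico 2 ℓ) := by
    ext x; simp only [Finset.mem_Ioo, Finset.mem_insert, Finset.mem_Ico]; omega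
  have hnot1 : 1 ∉ Finset.Ico 2 ℓ := by simp
  have hsum2 : ∑ m ∈ Finset.Ico 2 ℓ, t (m:ℤ) ≤ A * (1 + Real.log ℓ) := by
    have hb : ∀ m ∈ Finset.Ico 2 ℓ, t (m:ℤ) ≤ A * (1/((m:ℝ)-1)) := by
      intro m hm
      have h2m : (2:ℤ) ≤ (m:ℤ) := by exact_mod_cast (Finset.mem_Ico.mp hm).1
      simpa using hterm (m:ℤ) h2m
    have hharm : (harmonic ℓ : ℝ) = ∑ i ∈ Finset.range ℓ, (1/((i:ℝ)+1)) := by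
      rw [harmonic]; push_cast; simp [one_div]
    calc ∑ m ∈ Finset.Ico 2 ℓ, t (m:ℤ)
        ≤ ∑ m ∈ Finset.Ico 2 ℓ, A * (1/((m:ℝ)-1)) := Finset.sum_le_sum hb
      _ = ∑ i ∈ Finset.range (ℓ-2), A * (1/(((2+i:ℕ):ℝ)-1)) :=
          Finset.sum_Ico_eq_sum_range (fun m => A * (1/((m:ℝ)-1))) 2 ℓ
      _ = A * ∑ i ∈ Finset.range (ℓ-2), (1/((i:ℝ)+1)) := by
          rw [Finset.mul_sum]
          refine Finset.sum_congr rfl ?_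
          intro i _
          congr 1
          push_cast
          ring_nf
      _ ≤ A * ∑ i ∈ Finset.range ℓ, (1/((i:ℝ)+1)) := by
          refine mul_le_mul_of_nonneg_left ?_ hA0
          refine Finset.sum_le_sum_of_subset_of_nonneg
            (Finset.range_subset_range.mpr (Nat.sub_le ℓ 2)) ?_
          intro i _ _
          positivity
      _ = A * (harmonic ℓ : ℝ) := by rw [hharm]
      _ ≤ A * (1 + Real.log ℓ) :=
          mul_le_mul_of_nonneg_left (harmonic_le_one_add_log ℓ) hA0
  have hcast1 : t (((1:ℕ):ℤ)) = t 1 := by norm_num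
  have hfinal : ∑ j ∈ Finset.Ioo (-(ℓ:ℤ)) (ℓ:ℤ), t j ≤ (3 + 2*A) + 2*A*Real.log ℓ := by
    rw [hstep1, hnat, hIooN, Finset.sum_insert hnot1, hcast1]
    linarith
  have hlogle : Real.log 2 ≤ Real.log ℓ :=
    Real.log_le_log two_pos (by exact_mod_cast hℓ)
  have hlogℓ : 0 < Real.log ℓ := lt_of_lt_of_le hlog2 hlogle
  have h3A : 3 + 2*A ≤ (3 + 2*A)/Real.log 2 * Real.log ℓ := by
    rw [div_mul_eq_mul_div, le_div_iff₀ hlog2]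
    exact mul_le_mul_of_nonneg_left hlogle (by positivity)
  calc ∑ j ∈ Finset.Ioo (-(ℓ:ℤ)) (ℓ:ℤ), t j
      ≤ (3 + 2*A) + 2*A*Real.log ℓ := hfinal
    _ ≤ (3 + 2*A)/Real.log 2 * Real.log ℓ + 2*A*Real.log ℓ := by linarith
    _ = ((3 + 2*A)/Real.log 2 + 2*A) * Real.log ℓ := by ring
end

section
/- Let $k \geq 2$, $\check{H} \in (\frac{1}{2}, 1)$, $v > 0$, and let $s = (s_1, \ldots, s_k) \in \mathbb{R}^k$ be such that $s_1 = \max(s_1, \ldots, s_k) < v$ and $s_1 > s_\kappa$ for all $\kappa \geq 2$. Then $\frac{1}{n} \sum_{j=1}^{\lfloor nv \rfloor} \prod_{\kappa=1}^{k} n \left( \left(\frac{j}{n} - s_\kappa\right)_+^{\check{H} - 1/2} - \left(\frac{j-1}{n} - s_\kappa\right)_+^{\check{H} - 1/2} \right) \to \left(\check{H} - \frac{1}{2}\right)^k \int_0^v \prod_{\kappa=1}^{k} (u - s_\kappa)_+^{\check{H} - 3/2} \, du$ as $n \to \infty$. -/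
open Filter MeasureTheory Set intervalIntegral Topology

lemma stmt6_Fnonneg (a x : ℝ) : 0 ≤ max x 0 ^ a := Real.rpow_nonneg (le_max_right x 0) a

lemma stmt6_Fmono {a x y : ℝ} (ha : 0 ≤ a) (hxy : x ≤ y) :
    max x 0 ^ a ≤ max y 0 ^ a :=
  Real.rpow_le_rpow (le_max_right x 0) (max_le_max hxy le_rfl) ha

lemma stmt6_mvt {a s x y : ℝ} (ha0 : 0 < a) (ha1 : a < 1) (hsx : s < x) (hxy : x < y) :
    a * (y - s) ^ (a - 1) * (y - x) ≤ max (y - s) 0 ^ a - max (x - s) 0 ^ a ∧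
      max (y - s) 0 ^ a - max (x - s) 0 ^ a ≤ a * (x - s) ^ (a - 1) * (y - x) := by
  have hsy : s < y := hsx.trans hxy
  have hmx : max (x - s) 0 = x - s := max_eq_left (by linarith)
  have hmy : max (y - s) 0 = y - s := max_eq_left (by linarith)
  have hderiv : ∀ t : ℝ, s < t →
      HasDerivAt (fun t : ℝ => (t - s) ^ a) (a * (t - s) ^ (a - 1)) t := by
    intro t ht
    have h1 : HasDerivAt (fun t : ℝ => t - s) 1 t := (hasDerivAt_id t).sub_const s
    have h2 := (Real.hasDerivAt_rpow_const (x := t - s) (p := a)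
      (Or.inl (by intro h; linarith [sub_pos.2 ht, h]))).comp t h1
    simpa [Function.comp_def] using h2
  obtain ⟨c, hc, hceq⟩ := exists_hasDerivAt_eq_slope (fun t : ℝ => (t - s) ^ a)
    (fun t => a * (t - s) ^ (a - 1)) hxy
    (fun t ht => (hderiv t (lt_of_lt_of_le hsx ht.1)).continuousAt.continuousWithinAt)
    (fun t ht => hderiv t (hsx.trans ht.1))
  have hyx : (0:ℝ) < y - x := by linarith
  rw [eq_div_iff hyx.ne'] at hceq
  have hcx : x < c := hc.1
  have hcy : c < y := hc.2
  have h1 : (y - s) ^ (a - 1) ≤ (c - s) ^ (a - 1) :=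
    Real.rpow_le_rpow_of_nonpos (by linarith) (by linarith) (by linarith)
  have h2 : (c - s) ^ (a - 1) ≤ (x - s) ^ (a - 1) :=
    Real.rpow_le_rpow_of_nonpos (by linarith) (by linarith) (by linarith)
  rw [hmx, hmy]
  constructor <;> nlinarith [hceq, mul_le_mul_of_nonneg_right h1 hyx.le,
    mul_le_mul_of_nonneg_right h2 hyx.le, ha0.le]

set_option maxHeartbeats 1000000 in
theorem stmt6 (k : ℕ) (hk : 2 ≤ k) (H : ℝ) (hH1 : 1 / 2 < H) (hH2 : H < 1)
    (v : ℝ) (hv : 0 < v) (s : Fin k → ℝ) (κ₀ : Fin k) (hκ₀ : (κ₀ : ℕ) = 0)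
    (hmax : ∀ κ : Fin k, κ ≠ κ₀ → s κ < s κ₀) (hs0 : s κ₀ < v) :
    Tendsto
      (fun n : ℕ =>
        (1 / (n : ℝ)) * ∑ j ∈ Finset.Icc (1 : ℤ) ⌊(n : ℝ) * v⌋,
          ∏ κ : Fin k,
            (n : ℝ) * ((max ((j : ℝ) / n - s κ) 0) ^ (H - 1 / 2)
              - (max (((j : ℝ) - 1) / n - s κ) 0) ^ (H - 1 / 2)))
      atTop
      (nhds ((H - 1 / 2) ^ k *
        ∫ u in (0 : ℝ)..v, ∏ κ : Fin k, (max (u - s κ) 0) ^ (H - 3 / 2))) := by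
  classical
  set a : ℝ := H - 1 / 2 with ha_def
  set b : ℝ := H - 3 / 2 with hb_def
  have ha0 : 0 < a := by rw [ha_def]; linarith
  have ha1 : a < 1 := by rw [ha_def]; linarith
  have hb0 : b < 0 := by rw [hb_def]; linarith
  have hb1 : (-1:ℝ) < b := by rw [hb_def]; linarith
  have hba : b = a - 1 := by rw [ha_def, hb_def]; ring
  set s₁ : ℝ := s κ₀ with hs₁def
  set P : ℝ → ℝ := fun u => ∏ κ : Fin k, max (u - s κ) 0 ^ b with hPdef
  -- basic facts about s
  have hsle : ∀ κ, s κ ≤ s₁ := by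
    intro κ
    by_cases h : κ = κ₀
    · rw [h]
    · exact (hmax κ h).le
  have hne : (Finset.univ.erase κ₀).Nonempty := by
    have hcard : 1 < Fintype.card (Fin k) := by rw [Fintype.card_fin]; omega
    obtain ⟨κ₁, hκ₁⟩ := Fintype.exists_ne_of_one_lt_card hcard κ₀
    exact ⟨κ₁, Finset.mem_erase.2 ⟨hκ₁, Finset.mem_univ _⟩⟩
  set m : ℝ := (Finset.univ.erase κ₀).inf' hne (fun κ => s₁ - s κ) with hmdef
  have hm0 : 0 < m := by
    rw [hmdef, Finset.lt_inf'_iff]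
    intro κ hκ
    exact sub_pos.2 (hmax κ (Finset.mem_erase.1 hκ).1)
  have hmle : ∀ κ, κ ≠ κ₀ → m ≤ s₁ - s κ := by
    intro κ h
    exact Finset.inf'_le _ (Finset.mem_erase.2 ⟨h, Finset.mem_univ _⟩)
  set s₁' : ℝ := max s₁ 0 with hs₁'def
  have hs₁'0 : 0 ≤ s₁' := le_max_right _ _
  have hs₁'v : s₁' < v := max_lt hs0 hv
  have hs₁'ge : s₁ ≤ s₁' := le_max_left _ _
  -- continuity of products of factors
  have hfactor_cont : ∀ (κ : Fin k) (S : Set ℝ), (∀ u ∈ S, s κ < u) →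
      ContinuousOn (fun u => max (u - s κ) 0 ^ b) S := by
    intro κ S hS u hu
    have h1 : ContinuousAt (fun u : ℝ => max (u - s κ) 0) u :=
      (((continuous_id.sub continuous_const).max continuous_const)).continuousAt
    have hpos : 0 < max (u - s κ) 0 :=
      lt_of_lt_of_le (sub_pos.2 (hS u hu)) (le_max_left _ _)
    have h2 : ContinuousAt (fun x : ℝ => x ^ b) (max (u - s κ) 0) :=
      Real.continuousAt_rpow_const _ b (Or.inl hpos.ne')
    have h3 := ContinuousAt.comp (x := u) (f := fun u : ℝ => max (u - s κ) 0) h2 h1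
    exact h3.continuousWithinAt
  have hprod_cont : ∀ (t : Finset (Fin k)) (S : Set ℝ),
      (∀ u ∈ S, s₁ ≤ u ∧ (s₁ < u ∨ κ₀ ∉ t)) →
      ContinuousOn (fun u => ∏ κ ∈ t, max (u - s κ) 0 ^ b) S := by
    intro t S hS
    apply continuousOn_finset_prod
    intro κ hκ
    apply hfactor_cont
    intro u hu
    rcases (hS u hu).2 with h | h
    · exact lt_of_le_of_lt (hsle κ) h
    · have hκκ₀ : κ ≠ κ₀ := fun he => h (he ▸ hκ)
      exact lt_of_lt_of_le (hmax κ hκκ₀) (hS u hu).1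
  -- continuity of P strictly above s₁
  have hPcont : ∀ z w : ℝ, s₁ < z → ContinuousOn P (Icc z w) := by
    intro z w hz
    apply hprod_cont
    intro u hu
    exact ⟨le_trans hz.le hu.1, Or.inl (lt_of_lt_of_le hz hu.1)⟩
  have hPintgr : ∀ z w : ℝ, s₁ < z → z ≤ w → IntervalIntegrable P volume z w := by
    intro z w hz hzw
    apply ContinuousOn.intervalIntegrable
    rw [uIcc_of_le hzw]
    exact hPcont z w hz
  -- integrability of P from s₁' to v + 1
  have hs₁'v1 : s₁' ≤ v + 1 := by linarith
  have hPsplit : P = fun u => max (u - s₁) 0 ^ b *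
      ∏ κ ∈ Finset.univ.erase κ₀, max (u - s κ) 0 ^ b := by
    funext u
    rw [hPdef]
    exact (Finset.mul_prod_erase Finset.univ _ (Finset.mem_univ κ₀)).symm
  have hPint : IntervalIntegrable P volume s₁' (v + 1) := by
    rw [hPsplit]
    apply IntervalIntegrable.mul_continuousOn
    · have h1 : IntervalIntegrable (fun u : ℝ => u ^ b) volume (s₁' - s₁) (v + 1 - s₁) :=
        intervalIntegrable_rpow' hb1
      have h2 := h1.comp_sub_right s₁
      have h3 : IntervalIntegrable (fun u : ℝ => (u - s₁) ^ b) volume s₁' (v + 1) := by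
        simpa using h2
      rw [intervalIntegrable_iff] at h3 ⊢
      apply h3.congr_fun ?_ measurableSet_uIoc
      intro u hu
      rw [Set.uIoc_of_le hs₁'v1] at hu
      have : 0 ≤ u - s₁ := by
        have := hu.1
        have := hs₁'ge
        linarith
      show (u - s₁) ^ b = max (u - s₁) 0 ^ b
      rw [max_eq_left this]
    · rw [uIcc_of_le hs₁'v1]
      apply hprod_cont
      intro u hu
      refine ⟨le_trans hs₁'ge hu.1, Or.inr (Finset.notMem_erase _ _)⟩
  set G : ℝ → ℝ := fun t => ∫ u in s₁'..t, P u with hGdef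
  have hGcont : ContinuousOn G (uIcc s₁' (v + 1)) :=
    intervalIntegral.continuousOn_primitive_interval' hPint left_mem_uIcc
  have hGs₁' : G s₁' = 0 := intervalIntegral.integral_same
  -- the target integral equals G v
  have hIv : (∫ u in (0:ℝ)..v, P u) = G v := by
    rcases le_or_gt s₁ 0 with h | h
    · have : s₁' = 0 := max_eq_right h
      rw [hGdef]
      rw [this]
    · have hseq : s₁' = s₁ := max_eq_left h.le
      have hz : EqOn P 0 (uIcc 0 s₁) := by
        intro u hu
        rw [uIcc_of_le h.le] at hu
        rw [hPdef]
        apply Finset.prod_eq_zero (Finset.mem_univ κ₀)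
        rw [max_eq_right (by linarith [hu.2] : u - s₁ ≤ 0)]
        exact Real.zero_rpow hb0.ne
      have hint1 : IntervalIntegrable P volume 0 s₁' := by
        rw [intervalIntegrable_iff]
        refine (MeasureTheory.integrableOn_zero).congr_fun ?_ measurableSet_uIoc
        intro u hu
        exact (hz (by rw [hseq] at hu; exact uIoc_subset_uIcc hu)).symm
      have hint2 : IntervalIntegrable P volume s₁' v := hPint.mono_set (by
        apply uIcc_subset_uIcc left_mem_uIcc
        rw [uIcc_of_le hs₁'v1]
        exact ⟨hs₁'v.le, by linarith⟩)
      have h0 : (∫ u in (0:ℝ)..s₁', P u) = 0 := by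
        rw [hseq, intervalIntegral.integral_congr hz]
        simp
      rw [← intervalIntegral.integral_add_adjacent_intervals hint1 hint2, h0, zero_add]
  -- endpoint sequences
  set cfun : ℕ → ℝ := fun n => ((max 1 (⌊(n:ℝ) * s₁⌋ + 3) - 1 : ℤ) : ℝ) / (n : ℝ) with hcdef
  set dfun : ℕ → ℝ := fun n => ((⌊(n:ℝ) * v⌋ : ℤ) : ℝ) / (n : ℝ) with hddef
  set Afun : ℕ → ℝ := fun n => a ^ k * (G (dfun n) - G (cfun n)) with hAdef
  set Ca : ℝ := a * (m / 2) ^ b with hCadef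
  set Cm : ℝ := (m ^ b) ^ (k - 1) with hCmdef
  set Efun : ℕ → ℝ := fun n =>
    2 * ((2 / (n:ℝ)) ^ a * Ca ^ (k - 1)) + a ^ k * Cm * (1 / (n:ℝ)) ^ a with hEdef
  have hcfun_bounds : ∀ n : ℕ, 1 ≤ (n:ℝ) →
      (s₁' ≤ cfun n ∧ cfun n ≤ s₁' + 2 / (n:ℝ)) ∧ s₁ + 1/(n:ℝ) ≤ cfun n := by
    intro n hn
    have hnn0 : (0:ℝ) < (n:ℝ) := by linarith
    have hfl1 : ((⌊(n:ℝ) * s₁⌋ : ℤ) : ℝ) ≤ (n:ℝ) * s₁ := Int.floor_le _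
    have hfl2 : (n:ℝ) * s₁ < ((⌊(n:ℝ)*s₁⌋ : ℤ) : ℝ) + 1 := Int.lt_floor_add_one _
    have hnum : ((max 1 (⌊(n:ℝ) * s₁⌋ + 3) - 1 : ℤ) : ℝ)
        = max 1 (((⌊(n:ℝ) * s₁⌋ : ℤ):ℝ) + 3) - 1 := by
      push_cast
      ring
    have hcval : cfun n = (max 1 (((⌊(n:ℝ) * s₁⌋ : ℤ):ℝ) + 3) - 1) / (n:ℝ) := by
      rw [hcdef]
      simp only []
      rw [hnum]
    have h1 : (n:ℝ) * s₁ + 1 ≤ max 1 (((⌊(n:ℝ) * s₁⌋ : ℤ):ℝ) + 3) - 1 := by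
      have := le_max_right (1:ℝ) (((⌊(n:ℝ) * s₁⌋ : ℤ):ℝ) + 3)
      linarith
    have h0 : 0 ≤ max 1 (((⌊(n:ℝ) * s₁⌋ : ℤ):ℝ) + 3) - 1 := by
      have := le_max_left (1:ℝ) (((⌊(n:ℝ) * s₁⌋ : ℤ):ℝ) + 3)
      linarith
    have h2 : max 1 (((⌊(n:ℝ) * s₁⌋ : ℤ):ℝ) + 3) - 1 ≤ (n:ℝ) * s₁' + 2 := by
      have hm1 : (1:ℝ) ≤ (n:ℝ)*s₁' + 3 := by nlinarith [mul_nonneg hnn0.le hs₁'0]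
      have hm2 : ((⌊(n:ℝ) * s₁⌋ : ℤ):ℝ) + 3 ≤ (n:ℝ)*s₁' + 3 := by
        have : (n:ℝ)*s₁ ≤ (n:ℝ)*s₁' := mul_le_mul_of_nonneg_left hs₁'ge hnn0.le
        linarith
      have := max_le hm1 hm2
      linarith
    refine ⟨⟨?_, ?_⟩, ?_⟩
    · rw [hcval]
      apply max_le
      · rw [le_div_iff₀ hnn0]
        linarith
      · positivity
    · rw [hcval, div_le_iff₀ hnn0]
      have h2n : (s₁' + 2 / (n:ℝ)) * (n:ℝ) = (n:ℝ) * s₁' + 2 := by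
        field_simp
      rw [h2n]
      exact h2
    · rw [hcval, le_div_iff₀ hnn0]
      have : (s₁ + 1 / (n:ℝ)) * (n:ℝ) = (n:ℝ) * s₁ + 1 := by
        field_simp
      rw [this]
      exact h1
  have hdfun_bounds : ∀ n : ℕ, 1 ≤ (n:ℝ) → v - 1/(n:ℝ) ≤ dfun n ∧ dfun n ≤ v := by
    intro n hn
    have hnn0 : (0:ℝ) < (n:ℝ) := by linarith
    have hfl1 : ((⌊(n:ℝ) * v⌋ : ℤ) : ℝ) ≤ (n:ℝ) * v := Int.floor_le _
    have hfl2 : (n:ℝ) * v < ((⌊(n:ℝ)*v⌋ : ℤ) : ℝ) + 1 := Int.lt_floor_add_one _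
    constructor
    · rw [hddef]
      simp only []
      rw [le_div_iff₀ hnn0]
      have : (v - 1 / (n:ℝ)) * (n:ℝ) = (n:ℝ) * v - 1 := by
        field_simp
      rw [this]
      linarith
    · rw [hddef]
      simp only []
      rw [div_le_iff₀ hnn0]
      linarith [mul_comm v (n:ℝ)]
  have hev1 : ∀ᶠ n : ℕ in atTop, 1 ≤ (n:ℝ) :=
    tendsto_natCast_atTop_atTop.eventually_ge_atTop 1
  have htwo : Tendsto (fun n : ℕ => 2 / (n:ℝ)) atTop (𝓝 0) :=
    tendsto_const_div_atTop_nhds_zero_nat 2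
  have hone : Tendsto (fun n : ℕ => 1 / (n:ℝ)) atTop (𝓝 0) :=
    tendsto_one_div_atTop_nhds_zero_nat
  have hcfun_lim : Tendsto cfun atTop (𝓝 s₁') := by
    have hupper : Tendsto (fun n : ℕ => s₁' + 2 / (n:ℝ)) atTop (𝓝 (s₁' + 0)) :=
      tendsto_const_nhds.add htwo
    rw [add_zero] at hupper
    apply tendsto_of_tendsto_of_tendsto_of_le_of_le' tendsto_const_nhds hupper
    · exact hev1.mono fun n hn => ((hcfun_bounds n hn).1).1
    · exact hev1.mono fun n hn => ((hcfun_bounds n hn).1).2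
  have hdfun_lim : Tendsto dfun atTop (𝓝 v) := by
    have hlower : Tendsto (fun n : ℕ => v - 1 / (n:ℝ)) atTop (𝓝 (v - 0)) :=
      tendsto_const_nhds.sub hone
    rw [sub_zero] at hlower
    apply tendsto_of_tendsto_of_tendsto_of_le_of_le' hlower tendsto_const_nhds
    · exact hev1.mono fun n hn => (hdfun_bounds n hn).1
    · exact hev1.mono fun n hn => (hdfun_bounds n hn).2
  have hc_mem : ∀ᶠ n : ℕ in atTop, cfun n ∈ uIcc s₁' (v + 1) := by
    have h2small : ∀ᶠ n : ℕ in atTop, 2 / (n:ℝ) < v + 1 - s₁' :=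
      htwo.eventually_lt_const (by linarith)
    filter_upwards [hev1, h2small] with n hn h2n
    rw [uIcc_of_le hs₁'v1]
    refine ⟨((hcfun_bounds n hn).1).1, ?_⟩
    have := ((hcfun_bounds n hn).1).2
    linarith
  have hd_mem : ∀ᶠ n : ℕ in atTop, dfun n ∈ uIcc s₁' (v + 1) := by
    have h1small : ∀ᶠ n : ℕ in atTop, 1 / (n:ℝ) < v - s₁' :=
      hone.eventually_lt_const (by linarith)
    filter_upwards [hev1, h1small] with n hn h1n
    rw [uIcc_of_le hs₁'v1]
    have h := hdfun_bounds n hn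
    exact ⟨by linarith [h.1], by linarith [h.2]⟩
  have hv_mem : v ∈ uIcc s₁' (v + 1) := by
    rw [uIcc_of_le hs₁'v1]
    exact ⟨hs₁'v.le, by linarith⟩
  have hGc_lim : Tendsto (fun n => G (cfun n)) atTop (𝓝 (G s₁')) :=
    (hGcont _ left_mem_uIcc).tendsto.comp
      (tendsto_nhdsWithin_of_tendsto_nhds_of_eventually_within _ hcfun_lim hc_mem)
  have hGd_lim : Tendsto (fun n => G (dfun n)) atTop (𝓝 (G v)) :=
    (hGcont _ hv_mem).tendsto.comp
      (tendsto_nhdsWithin_of_tendsto_nhds_of_eventually_within _ hdfun_lim hd_mem)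
  have hAfun_lim : Tendsto Afun atTop (𝓝 (a ^ k * G v)) := by
    have := (hGd_lim.sub hGc_lim).const_mul (a ^ k)
    rw [hGs₁', sub_zero] at this
    exact this
  have hrpow0 : ∀ f : ℕ → ℝ, Tendsto f atTop (𝓝 0) →
      Tendsto (fun n => (f n) ^ a) atTop (𝓝 0) := by
    intro f hf
    have hc : ContinuousAt (fun x : ℝ => x ^ a) 0 :=
      Real.continuousAt_rpow_const 0 a (Or.inr ha0.le)
    have := hc.tendsto.comp hf
    simpa [Real.zero_rpow ha0.ne', Function.comp_def] using this
  have hEfun_lim : Tendsto Efun atTop (𝓝 0) := by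
    have h2a := hrpow0 _ htwo
    have h1a := hrpow0 _ hone
    have := (((h2a.mul_const (Ca ^ (k-1))).const_mul 2)).add (h1a.const_mul (a ^ k * Cm))
    rw [show 2 * (0 * Ca ^ (k-1)) + a ^ k * Cm * 0 = 0 by ring] at this
    exact this
  have hbound : ∀ᶠ n : ℕ in atTop,
      ‖(1 / (n : ℝ)) * ∑ j ∈ Finset.Icc (1 : ℤ) ⌊(n : ℝ) * v⌋,
          ∏ κ : Fin k,
            (n : ℝ) * ((max ((j : ℝ) / n - s κ) 0) ^ a
              - (max (((j : ℝ) - 1) / n - s κ) 0) ^ a) - Afun n‖ ≤ Efun n := by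
    have hevm : ∀ᶠ n : ℕ in atTop, 2 ≤ (n:ℝ) * m :=
      (tendsto_natCast_atTop_atTop.atTop_mul_const hm0).eventually_ge_atTop 2
    have hevvs : ∀ᶠ n : ℕ in atTop, 4 ≤ (n:ℝ) * (v - s₁) :=
      (tendsto_natCast_atTop_atTop.atTop_mul_const (by linarith : (0:ℝ) < v - s₁)).eventually_ge_atTop 4
    have hevv : ∀ᶠ n : ℕ in atTop, 2 ≤ (n:ℝ) * v :=
      (tendsto_natCast_atTop_atTop.atTop_mul_const hv).eventually_ge_atTop 2
    filter_upwards [hev1, hevm, hevvs, hevv] with n hn1 hnm hnvs hnv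
    set nn : ℝ := (n : ℝ) with hnndef
    have hnn0 : (0:ℝ) < nn := by linarith
    set J : ℤ := max 1 (⌊nn * s₁⌋ + 3) with hJdef
    set N : ℤ := ⌊nn * v⌋ with hNdef
    set x : ℤ → ℝ := fun j => (j:ℝ)/nn with hxdef
    set Q : ℝ → ℝ := fun t => ∏ κ : Fin k, (t - s κ) ^ b with hQdef
    set g : ℤ → ℝ := fun j =>
      (1/nn) * ∏ κ : Fin k, nn * (max (x j - s κ) 0 ^ a - max (x (j-1) - s κ) 0 ^ a) with hgdef
    have hx1 : ∀ j : ℤ, x (j-1) = ((j:ℝ)-1)/nn := by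
      intro j
      simp only [hxdef]
      push_cast
      ring
    have hfl_s1_le : ((⌊nn*s₁⌋ : ℤ) : ℝ) ≤ nn*s₁ := Int.floor_le _
    have hfl_s1_gt : nn*s₁ < ((⌊nn*s₁⌋ : ℤ) : ℝ) + 1 := Int.lt_floor_add_one _
    have hNle : (N:ℝ) ≤ nn*v := by rw [hNdef]; exact Int.floor_le _
    have hNgt : nn*v < (N:ℝ) + 1 := by rw [hNdef]; exact Int.lt_floor_add_one _
    have hJ1 : 1 ≤ J := le_max_left _ _
    have hJfl : ⌊nn*s₁⌋ + 3 ≤ J := le_max_right _ _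
    have hJN : J ≤ N := by
      apply max_le
      · rw [hNdef]
        apply Int.le_floor.2
        push_cast
        linarith
      · rw [hNdef]
        apply Int.le_floor.2
        push_cast
        linarith
    have hxmono : ∀ {i j : ℤ}, i ≤ j → x i ≤ x j := by
      intro i j hij
      simp only [hxdef]
      exact (div_le_div_iff_of_pos_right hnn0).2 (by exact_mod_cast hij)
    have hJcast : nn*s₁ + 2 ≤ (J:ℝ) := by
      have : ((⌊nn*s₁⌋ + 3 : ℤ) : ℝ) ≤ (J:ℝ) := Int.cast_le.2 hJfl
      push_cast at this
      linarith
    have hc_lb : s₁ + 1/nn ≤ x (J-1) := by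
      rw [hx1, le_div_iff₀ hnn0]
      have : (s₁ + 1/nn) * nn = nn * s₁ + 1 := by field_simp
      rw [this]
      linarith
    have h1nn_pos : (0:ℝ) < 1/nn := by positivity
    have hs₁c : s₁ < x (J-1) := by linarith
    have hc0 : (0:ℝ) ≤ x (J-1) := by
      rw [hx1]
      apply div_nonneg ?_ hnn0.le
      have : ((1:ℤ):ℝ) ≤ (J:ℝ) := Int.cast_le.2 hJ1
      push_cast at this
      linarith
    have hc_s₁' : s₁' ≤ x (J-1) := max_le (by linarith) hc0
    have hsκlt : ∀ (κ : Fin k) (j : ℤ), J - 1 ≤ j → s κ < x j := by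
      intro κ j hj
      exact lt_of_le_of_lt (hsle κ) (lt_of_lt_of_le hs₁c (hxmono hj))
    have hcd : x (J-1) ≤ x N := hxmono (by omega)
    have hd_le_v : x N ≤ v := by
      simp only [hxdef]
      rw [div_le_iff₀ hnn0]
      linarith [mul_comm v nn]
    -- Q facts
    have hQnonneg : ∀ t : ℝ, s₁ < t → 0 ≤ Q t := by
      intro t ht
      simp only [hQdef]
      apply Finset.prod_nonneg
      intro κ _
      apply Real.rpow_nonneg
      have := hsle κ
      linarith
    have hQanti : ∀ t u : ℝ, s₁ < t → t ≤ u → Q u ≤ Q t := by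
      intro t u ht htu
      simp only [hQdef]
      apply Finset.prod_le_prod
      · intro κ _
        apply Real.rpow_nonneg
        have := hsle κ
        linarith
      · intro κ _
        apply Real.rpow_le_rpow_of_nonpos ?_ (by linarith) hb0.le
        have := hsle κ
        linarith
    -- nonnegativity of factors and of g
    have hΔ_nonneg : ∀ (j : ℤ) (κ : Fin k),
        0 ≤ nn * (max (x j - s κ) 0 ^ a - max (x (j-1) - s κ) 0 ^ a) := by
      intro j κ
      apply mul_nonneg hnn0.le
      rw [sub_nonneg]
      apply stmt6_Fmono ha0.le
      have : x (j-1) ≤ x j := hxmono (by omega)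
      linarith
    have hg_nonneg : ∀ j : ℤ, 0 ≤ g j := by
      intro j
      simp only [hgdef]
      exact mul_nonneg (by positivity) (Finset.prod_nonneg fun κ _ => hΔ_nonneg j κ)
    -- per-term bound in region B
    have hterm : ∀ j : ℤ, J ≤ j →
        |g j - a ^ k * ∫ u in (x (j-1))..(x j), P u| ≤
          (a ^ k / nn) * (Q (x (j-1)) - Q (x j)) := by
      intro j hj
      have hj1 : J - 1 ≤ j - 1 := by omega
      have hs₁xj1 : s₁ < x (j-1) := lt_of_lt_of_le hs₁c (hxmono hj1)
      have hxlt : x (j-1) < x j := by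
        rw [hx1]
        simp only [hxdef]
        exact (div_lt_div_iff_of_pos_right hnn0).2 (by linarith)
      have hdiffx : x j - x (j-1) = 1/nn := by
        rw [hx1]
        simp only [hxdef]
        field_simp; ring
      have hfac_lb : ∀ κ : Fin k, a * (x j - s κ) ^ b ≤
          nn * (max (x j - s κ) 0 ^ a - max (x (j-1) - s κ) 0 ^ a) := by
        intro κ
        obtain ⟨h1, _⟩ := stmt6_mvt ha0 ha1 (hsκlt κ (j-1) hj1) hxlt
        rw [hdiffx] at h1
        have h2 := mul_le_mul_of_nonneg_right h1 hnn0.le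
        calc a * (x j - s κ) ^ b = a * (x j - s κ) ^ (a-1) * (1/nn) * nn := by
              rw [hba]; field_simp
          _ ≤ (max (x j - s κ) 0 ^ a - max (x (j-1) - s κ) 0 ^ a) * nn := h2
          _ = nn * (max (x j - s κ) 0 ^ a - max (x (j-1) - s κ) 0 ^ a) := by ring
      have hfac_ub : ∀ κ : Fin k,
          nn * (max (x j - s κ) 0 ^ a - max (x (j-1) - s κ) 0 ^ a) ≤
            a * (x (j-1) - s κ) ^ b := by
        intro κ
        obtain ⟨_, h1⟩ := stmt6_mvt ha0 ha1 (hsκlt κ (j-1) hj1) hxlt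
        rw [hdiffx] at h1
        have h2 := mul_le_mul_of_nonneg_right h1 hnn0.le
        calc nn * (max (x j - s κ) 0 ^ a - max (x (j-1) - s κ) 0 ^ a)
            = (max (x j - s κ) 0 ^ a - max (x (j-1) - s κ) 0 ^ a) * nn := by ring
          _ ≤ a * (x (j-1) - s κ) ^ (a-1) * (1/nn) * nn := h2
          _ = a * (x (j-1) - s κ) ^ b := by rw [hba]; field_simp
      have hfac_lb_nonneg : ∀ κ : Fin k, 0 ≤ a * (x j - s κ) ^ b := by
        intro κ
        apply mul_nonneg ha0.le
        apply Real.rpow_nonneg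
        have := hsκlt κ j (by omega)
        linarith
      have hprodQ : ∀ t : ℝ, (∏ κ : Fin k, a * (t - s κ) ^ b) = a ^ k * Q t := by
        intro t
        rw [Finset.prod_mul_distrib, Finset.prod_const, Finset.card_univ, Fintype.card_fin,
          hQdef]
      have hprod_lb : a ^ k * Q (x j) ≤
          ∏ κ : Fin k, nn * (max (x j - s κ) 0 ^ a - max (x (j-1) - s κ) 0 ^ a) := by
        rw [← hprodQ (x j)]
        exact Finset.prod_le_prod (fun κ _ => hfac_lb_nonneg κ) (fun κ _ => hfac_lb κ)
      have hprod_ub :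
          (∏ κ : Fin k, nn * (max (x j - s κ) 0 ^ a - max (x (j-1) - s κ) 0 ^ a)) ≤
            a ^ k * Q (x (j-1)) := by
        rw [← hprodQ (x (j-1))]
        exact Finset.prod_le_prod (fun κ _ => hΔ_nonneg j κ) (fun κ _ => hfac_ub κ)
      have hg_lb : a ^ k * (Q (x j) * (1/nn)) ≤ g j := by
        simp only [hgdef]
        have := mul_le_mul_of_nonneg_left hprod_lb h1nn_pos.le
        calc a ^ k * (Q (x j) * (1/nn)) = (1/nn) * (a ^ k * Q (x j)) := by ring
          _ ≤ _ := this
      have hg_ub : g j ≤ a ^ k * (Q (x (j-1)) * (1/nn)) := by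
        simp only [hgdef]
        have := mul_le_mul_of_nonneg_left hprod_ub h1nn_pos.le
        calc (1/nn) * ∏ κ : Fin k, nn * (max (x j - s κ) 0 ^ a - max (x (j-1) - s κ) 0 ^ a)
            ≤ (1/nn) * (a ^ k * Q (x (j-1))) := this
          _ = a ^ k * (Q (x (j-1)) * (1/nn)) := by ring
      -- integral bounds
      have hPu : ∀ u ∈ Icc (x (j-1)) (x j), P u = Q u := by
        intro u hu
        simp only [hPdef, hQdef]
        apply Finset.prod_congr rfl
        intro κ _
        have : s κ < u := lt_of_lt_of_le (hsκlt κ (j-1) hj1) hu.1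
        rw [max_eq_left (by linarith)]
      have hint : IntervalIntegrable P volume (x (j-1)) (x j) := hPintgr _ _ hs₁xj1 hxlt.le
      have hI_ub : (∫ u in (x (j-1))..(x j), P u) ≤ Q (x (j-1)) * (1/nn) := by
        have h1 : (∫ u in (x (j-1))..(x j), P u) ≤ ∫ _ in (x (j-1))..(x j), Q (x (j-1)) := by
          apply intervalIntegral.integral_mono_on hxlt.le hint intervalIntegrable_const
          intro u hu
          rw [hPu u hu]
          exact hQanti (x (j-1)) u hs₁xj1 hu.1
        rw [intervalIntegral.integral_const, smul_eq_mul, hdiffx] at h1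
        linarith
      have hI_lb : Q (x j) * (1/nn) ≤ ∫ u in (x (j-1))..(x j), P u := by
        have h1 : (∫ _ in (x (j-1))..(x j), Q (x j)) ≤ ∫ u in (x (j-1))..(x j), P u := by
          apply intervalIntegral.integral_mono_on hxlt.le intervalIntegrable_const hint
          intro u hu
          rw [hPu u hu]
          exact hQanti u (x j) (lt_of_lt_of_le hs₁xj1 hu.1) hu.2
        rw [intervalIntegral.integral_const, smul_eq_mul, hdiffx] at h1
        linarith
      have hak : (0:ℝ) ≤ a ^ k := pow_nonneg ha0.le k
      have hIlo := mul_le_mul_of_nonneg_left hI_lb hak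
      have hIhi := mul_le_mul_of_nonneg_left hI_ub hak
      have hring : (a ^ k / nn) * (Q (x (j-1)) - Q (x j))
          = a ^ k * (Q (x (j-1)) * (1/nn)) - a ^ k * (Q (x j) * (1/nn)) := by ring
      rw [abs_sub_le_iff]
      constructor
      · linarith
      · linarith
    -- induction over region B
    have keyB : ∀ N' : ℤ, J - 1 ≤ N' →
        |(∑ j ∈ Finset.Ioc (J-1) N', g j) - a ^ k * ∫ u in (x (J-1))..(x N'), P u| ≤
          (a ^ k / nn) * (Q (x (J-1)) - Q (x N')) := by
      intro N'
      refine Int.le_induction (m := J - 1)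
        (motive := fun N' _ => |(∑ j ∈ Finset.Ioc (J-1) N', g j)
            - a ^ k * ∫ u in (x (J-1))..(x N'), P u| ≤
          (a ^ k / nn) * (Q (x (J-1)) - Q (x N'))) ?_ ?_ N'
      · simp
      · intro M hM ih
        have hins : Finset.Ioc (J-1) (M+1) = insert (M+1) (Finset.Ioc (J-1) M) := by
          ext t
          simp only [Finset.mem_Ioc, Finset.mem_insert]
          omega
        have hnotmem : (M+1) ∉ Finset.Ioc (J-1) M := by simp
        have hsum : ∑ j ∈ Finset.Ioc (J-1) (M+1), g j
            = (∑ j ∈ Finset.Ioc (J-1) M, g j) + g (M+1) := by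
          rw [hins, Finset.sum_insert hnotmem]
          ring
        have hs₁M : s₁ < x M := lt_of_lt_of_le hs₁c (hxmono hM)
        have hint1 : IntervalIntegrable P volume (x (J-1)) (x M) :=
          hPintgr _ _ hs₁c (hxmono hM)
        have hint2 : IntervalIntegrable P volume (x M) (x (M+1)) :=
          hPintgr _ _ hs₁M (hxmono (by omega))
        have hadd : (∫ u in (x (J-1))..(x (M+1)), P u)
            = (∫ u in (x (J-1))..(x M), P u) + ∫ u in (x M)..(x (M+1)), P u :=
          (intervalIntegral.integral_add_adjacent_intervals hint1 hint2).symm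
        have hper := hterm (M+1) (by omega)
        rw [show (M+1-1 : ℤ) = M by ring] at hper
        rw [hsum, hadd]
        have harg : (∑ j ∈ Finset.Ioc (J-1) M, g j) + g (M+1)
              - a ^ k * ((∫ u in (x (J-1))..(x M), P u) + ∫ u in (x M)..(x (M+1)), P u)
            = ((∑ j ∈ Finset.Ioc (J-1) M, g j) - a ^ k * ∫ u in (x (J-1))..(x M), P u)
              + (g (M+1) - a ^ k * ∫ u in (x M)..(x (M+1)), P u) := by ring
        rw [harg]
        refine le_trans (abs_add_le _ _) ?_
        have hQQ : (a ^ k / nn) * (Q (x (J-1)) - Q (x (M+1)))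
            = (a ^ k / nn) * (Q (x (J-1)) - Q (x M))
              + (a ^ k / nn) * (Q (x M) - Q (x (M+1))) := by ring
        rw [hQQ]
        exact add_le_add ih hper
    have hB := keyB N (by omega)
    -- region A: terms vanish or are small
    have hgzero : ∀ j : ℤ, j ≤ ⌊nn*s₁⌋ → g j = 0 := by
      intro j hjle
      have hxj : x j - s₁ ≤ 0 := by
        simp only [hxdef]
        rw [sub_nonpos, div_le_iff₀ hnn0]
        calc (j:ℝ) ≤ ((⌊nn*s₁⌋ : ℤ):ℝ) := Int.cast_le.2 hjle
          _ ≤ nn*s₁ := hfl_s1_le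
          _ = s₁*nn := mul_comm _ _
      have hxj1 : x (j-1) - s₁ ≤ 0 := by
        have : x (j-1) ≤ x j := hxmono (by omega)
        linarith
      simp only [hgdef]
      rw [Finset.prod_eq_zero (Finset.mem_univ κ₀), mul_zero]
      rw [← hs₁def, max_eq_right hxj, max_eq_right hxj1, Real.zero_rpow ha0.ne']
      ring
    have hj_ub : ∀ j : ℤ, 1 ≤ j → j ≤ J - 1 → j ≤ ⌊nn*s₁⌋ + 2 := by
      intro j h1 h2
      rcases le_or_gt (⌊nn*s₁⌋ + 3) 1 with h | h
      · have : J = 1 := by rw [hJdef]; exact max_eq_left h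
        omega
      · have : J = ⌊nn*s₁⌋ + 3 := by rw [hJdef]; exact max_eq_right (by omega)
        omega
    have hA1 : ∀ j ∈ Finset.Ioc (0:ℤ) (J-1), ⌊nn*s₁⌋ + 1 ≤ j →
        g j ≤ (2/nn) ^ a * Ca ^ (k-1) := by
      intro j hj hjge
      rw [Finset.mem_Ioc] at hj
      have hjub : j ≤ ⌊nn*s₁⌋ + 2 := hj_ub j (by omega) hj.2
      have hxj_ub : x j - s₁ ≤ 2/nn := by
        simp only [hxdef]
        rw [sub_le_iff_le_add, div_le_iff₀ hnn0]
        have h1 : (j:ℝ) ≤ ((⌊nn*s₁⌋ : ℤ):ℝ) + 2 := by exact_mod_cast hjub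
        have h2 : (2/nn + s₁) * nn = 2 + nn * s₁ := by field_simp
        rw [h2]
        linarith
      have hxj1_lb : s₁ - 1/nn ≤ x (j-1) := by
        rw [hx1, le_div_iff₀ hnn0]
        have h1 : ((⌊nn*s₁⌋ : ℤ):ℝ) + 1 ≤ (j:ℝ) := by exact_mod_cast hjge
        have h2 : (s₁ - 1/nn) * nn = nn * s₁ - 1 := by field_simp
        rw [h2]
        linarith
      have h1nn_m : 1/nn ≤ m/2 := by
        rw [div_le_div_iff₀ hnn0 two_pos]
        linarith [mul_comm nn m]
      have hxlt : x (j-1) < x j := by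
        rw [hx1]
        simp only [hxdef]
        exact (div_lt_div_iff_of_pos_right hnn0).2 (by linarith)
      have hκbound : ∀ κ : Fin k, κ ≠ κ₀ →
          nn * (max (x j - s κ) 0 ^ a - max (x (j-1) - s κ) 0 ^ a) ≤ Ca := by
        intro κ hκ
        have hms : m ≤ s₁ - s κ := hmle κ hκ
        have hm2 : m/2 ≤ x (j-1) - s κ := by linarith
        have hsκx : s κ < x (j-1) := by linarith [half_pos hm0]
        obtain ⟨_, h1⟩ := stmt6_mvt ha0 ha1 hsκx hxlt
        have hd : x j - x (j-1) = 1/nn := by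
          rw [hx1]
          simp only [hxdef]
          field_simp; ring
        rw [hd] at h1
        have h2 := mul_le_mul_of_nonneg_right h1 hnn0.le
        have h3 : a * (x (j-1) - s κ) ^ (a-1) * (1/nn) * nn
            = a * (x (j-1) - s κ) ^ (a-1) := by field_simp
        have h4 : (x (j-1) - s κ) ^ (a-1) ≤ (m/2) ^ (a-1) :=
          Real.rpow_le_rpow_of_nonpos (half_pos hm0) hm2 (by linarith)
        calc nn * (max (x j - s κ) 0 ^ a - max (x (j-1) - s κ) 0 ^ a)
            = (max (x j - s κ) 0 ^ a - max (x (j-1) - s κ) 0 ^ a) * nn := by ring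
          _ ≤ a * (x (j-1) - s κ) ^ (a-1) * (1/nn) * nn := h2
          _ = a * (x (j-1) - s κ) ^ (a-1) := h3
          _ ≤ a * (m/2) ^ (a-1) := mul_le_mul_of_nonneg_left h4 ha0.le
          _ = Ca := by rw [hCadef, hba]
      have hκ₀bound : nn * (max (x j - s κ₀) 0 ^ a - max (x (j-1) - s κ₀) 0 ^ a)
          ≤ nn * (2/nn) ^ a := by
        apply mul_le_mul_of_nonneg_left ?_ hnn0.le
        have h1 : max (x j - s κ₀) 0 ^ a ≤ (2/nn) ^ a := by
          apply Real.rpow_le_rpow (le_max_right _ _) ?_ ha0.le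
          apply max_le ?_ (by positivity)
          rw [← hs₁def]
          exact hxj_ub
        have h2 : 0 ≤ max (x (j-1) - s κ₀) 0 ^ a := stmt6_Fnonneg _ _
        linarith
      have hprod : (∏ κ : Fin k, nn * (max (x j - s κ) 0 ^ a - max (x (j-1) - s κ) 0 ^ a))
          ≤ nn * (2/nn) ^ a * Ca ^ (k-1) := by
        have hstep := Finset.prod_le_prod (s := Finset.univ)
          (f := fun κ : Fin k => nn * (max (x j - s κ) 0 ^ a - max (x (j-1) - s κ) 0 ^ a))
          (g := fun κ : Fin k => if κ = κ₀ then nn * (2/nn) ^ a else Ca)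
          (fun κ _ => hΔ_nonneg j κ)
          (fun κ _ => by
            by_cases h : κ = κ₀
            · rw [if_pos h, h]
              exact hκ₀bound
            · rw [if_neg h]
              exact hκbound κ h)
        refine le_trans hstep (le_of_eq ?_)
        rw [← Finset.mul_prod_erase Finset.univ _ (Finset.mem_univ κ₀), if_pos rfl]
        congr 1
        rw [Finset.prod_congr rfl (fun κ hκ => if_neg (Finset.mem_erase.1 hκ).1),
          Finset.prod_const, Finset.card_erase_of_mem (Finset.mem_univ κ₀),
          Finset.card_univ, Fintype.card_fin]
      simp only [hgdef]
      have hinv : (1/nn) * nn = 1 := one_div_mul_cancel hnn0.ne'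
      calc (1/nn) * ∏ κ : Fin k, nn * (max (x j - s κ) 0 ^ a - max (x (j-1) - s κ) 0 ^ a)
          ≤ (1/nn) * (nn * (2/nn) ^ a * Ca ^ (k-1)) :=
            mul_le_mul_of_nonneg_left hprod h1nn_pos.le
        _ = ((1/nn) * nn) * ((2/nn) ^ a * Ca ^ (k-1)) := by ring
        _ = (2/nn) ^ a * Ca ^ (k-1) := by rw [hinv, one_mul]
    have hCa0 : 0 ≤ Ca := by
      rw [hCadef]
      exact mul_nonneg ha0.le (Real.rpow_nonneg (by positivity) _)
    have hβ0 : 0 ≤ (2/nn) ^ a * Ca ^ (k-1) :=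
      mul_nonneg (Real.rpow_nonneg (by positivity) _) (pow_nonneg hCa0 _)
    have hAsum : (∑ j ∈ Finset.Ioc (0:ℤ) (J-1), g j) ≤ 2 * ((2/nn) ^ a * Ca ^ (k-1)) := by
      have hfilter : ∑ j ∈ Finset.Ioc (0:ℤ) (J-1), g j
          = ∑ j ∈ (Finset.Ioc (0:ℤ) (J-1)).filter (fun j => ⌊nn*s₁⌋ + 1 ≤ j), g j := by
        symm
        apply Finset.sum_filter_of_ne
        intro j _ hgj
        by_contra hlt
        push_neg at hlt
        exact hgj (hgzero j (by omega))
      rw [hfilter]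
      have hsub : (Finset.Ioc (0:ℤ) (J-1)).filter (fun j => ⌊nn*s₁⌋ + 1 ≤ j)
          ⊆ Finset.Icc (⌊nn*s₁⌋ + 1) (⌊nn*s₁⌋ + 2) := by
        intro j hj
        rw [Finset.mem_filter, Finset.mem_Ioc] at hj
        rw [Finset.mem_Icc]
        exact ⟨hj.2, hj_ub j (by omega) hj.1.2⟩
      have hcard : ((Finset.Ioc (0:ℤ) (J-1)).filter (fun j => ⌊nn*s₁⌋ + 1 ≤ j)).card ≤ 2 := by
        refine le_trans (Finset.card_le_card hsub) ?_
        rw [Int.card_Icc]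
        simp
      calc ∑ j ∈ (Finset.Ioc (0:ℤ) (J-1)).filter (fun j => ⌊nn*s₁⌋ + 1 ≤ j), g j
          ≤ ((Finset.Ioc (0:ℤ) (J-1)).filter (fun j => ⌊nn*s₁⌋ + 1 ≤ j)).card
            • ((2/nn) ^ a * Ca ^ (k-1)) := by
            apply Finset.sum_le_card_nsmul
            intro j hj
            rw [Finset.mem_filter] at hj
            exact hA1 j hj.1 hj.2
        _ ≤ 2 * ((2/nn) ^ a * Ca ^ (k-1)) := by
            rw [nsmul_eq_mul]
            apply mul_le_mul_of_nonneg_right ?_ hβ0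
            exact_mod_cast hcard
    -- bound on the telescoped error
    have hQd0 : 0 ≤ Q (x N) := hQnonneg _ (lt_of_lt_of_le hs₁c hcd)
    have hQc_ub : Q (x (J-1)) ≤ (1/nn) ^ b * Cm := by
      have hsplitQ : Q (x (J-1)) = (x (J-1) - s κ₀) ^ b *
          ∏ κ ∈ Finset.univ.erase κ₀, (x (J-1) - s κ) ^ b := by
        simp only [hQdef]
        exact (Finset.mul_prod_erase Finset.univ _ (Finset.mem_univ κ₀)).symm
      rw [hsplitQ]
      have hb1' : (1:ℝ)/nn ≤ x (J-1) - s κ₀ := by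
        rw [← hs₁def]
        linarith
      have hbound1 : (x (J-1) - s κ₀) ^ b ≤ (1/nn) ^ b :=
        Real.rpow_le_rpow_of_nonpos h1nn_pos hb1' hb0.le
      have hbound2 : (∏ κ ∈ Finset.univ.erase κ₀, (x (J-1) - s κ) ^ b) ≤ Cm := by
        rw [hCmdef]
        have : Cm = Cm := rfl
        calc (∏ κ ∈ Finset.univ.erase κ₀, (x (J-1) - s κ) ^ b)
            ≤ ∏ _κ ∈ Finset.univ.erase κ₀, m ^ b := by
              apply Finset.prod_le_prod
              · intro κ hκ
                apply Real.rpow_nonneg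
                have := hsle κ
                linarith
              · intro κ hκ
                apply Real.rpow_le_rpow_of_nonpos hm0 ?_ hb0.le
                have := hmle κ (Finset.mem_erase.1 hκ).1
                linarith
          _ = (m ^ b) ^ (k-1) := by
              rw [Finset.prod_const, Finset.card_erase_of_mem (Finset.mem_univ κ₀),
                Finset.card_univ, Fintype.card_fin]
      have h2 : 0 ≤ ∏ κ ∈ Finset.univ.erase κ₀, (x (J-1) - s κ) ^ b :=
        Finset.prod_nonneg fun κ _ => Real.rpow_nonneg (by linarith [hsle κ]) _
      exact mul_le_mul hbound1 hbound2 h2 (Real.rpow_nonneg h1nn_pos.le _)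
    have hpow : (1/nn) ^ b * (1/nn) = (1/nn) ^ a := by
      calc (1/nn) ^ b * (1/nn) = (1/nn) ^ b * (1/nn) ^ (1:ℝ) := by rw [Real.rpow_one]
        _ = (1/nn) ^ (b + 1) := (Real.rpow_add h1nn_pos b 1).symm
        _ = (1/nn) ^ a := by rw [hba]; ring_nf
    have herr : (a ^ k / nn) * (Q (x (J-1)) - Q (x N)) ≤ a ^ k * Cm * (1/nn) ^ a := by
      have hak : (0:ℝ) ≤ a ^ k := pow_nonneg ha0.le k
      have h1 : (a ^ k / nn) * (Q (x (J-1)) - Q (x N)) ≤ (a ^ k / nn) * Q (x (J-1)) := by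
        apply mul_le_mul_of_nonneg_left ?_ (by positivity)
        linarith
      have h2 : (a ^ k / nn) * Q (x (J-1)) ≤ (a ^ k / nn) * ((1/nn) ^ b * Cm) :=
        mul_le_mul_of_nonneg_left hQc_ub (by positivity)
      have h3 : (a ^ k / nn) * ((1/nn) ^ b * Cm) = a ^ k * Cm * ((1/nn) ^ b * (1/nn)) := by
        ring
      rw [h3, hpow] at h2
      linarith
    -- assembling
    have hgeq : ∀ j : ℤ, (1/nn) * (∏ κ : Fin k, nn * ((max ((j:ℝ)/nn - s κ) 0) ^ a
        - (max (((j:ℝ)-1)/nn - s κ) 0) ^ a)) = g j := by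
      intro j
      simp only [hgdef]
      rw [hx1]
    have hsplit_idx : Finset.Icc (1:ℤ) N = Finset.Ioc 0 N := by
      ext t
      simp only [Finset.mem_Icc, Finset.mem_Ioc]
      omega
    have hdisj : Disjoint (Finset.Ioc (0:ℤ) (J-1)) (Finset.Ioc (J-1) N) := by
      rw [Finset.disjoint_left]
      intro t ht ht'
      rw [Finset.mem_Ioc] at ht ht'
      omega
    have hunion : Finset.Ioc (0:ℤ) (J-1) ∪ Finset.Ioc (J-1) N = Finset.Ioc 0 N :=
      Finset.Ioc_union_Ioc_eq_Ioc (by omega) (by omega)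
    have hSn : (1/nn) * (∑ j ∈ Finset.Icc (1:ℤ) N, ∏ κ : Fin k,
          nn * ((max ((j:ℝ)/nn - s κ) 0) ^ a - (max (((j:ℝ)-1)/nn - s κ) 0) ^ a))
        = (∑ j ∈ Finset.Ioc (0:ℤ) (J-1), g j) + (∑ j ∈ Finset.Ioc (J-1) N, g j) := by
      rw [Finset.mul_sum, hsplit_idx, ← hunion, Finset.sum_union hdisj]
      congr 1 <;> exact Finset.sum_congr rfl (fun j _ => hgeq j)
    have hGint : (∫ u in (x (J-1))..(x N), P u) = G (x N) - G (x (J-1)) := by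
      have hint1 : IntervalIntegrable P volume s₁' (x (J-1)) := by
        apply hPint.mono_set
        apply uIcc_subset_uIcc left_mem_uIcc
        rw [uIcc_of_le hs₁'v1]
        exact ⟨hc_s₁', by linarith [hcd, hd_le_v]⟩
      have hint2 : IntervalIntegrable P volume (x (J-1)) (x N) := hPintgr _ _ hs₁c hcd
      have hh := intervalIntegral.integral_add_adjacent_intervals hint1 hint2
      simp only [hGdef]
      linarith
    have hcfun_eq : cfun n = x (J-1) := by
      rw [hx1]
      show ((J - 1 : ℤ) : ℝ) / nn = ((J:ℝ) - 1) / nn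
      push_cast
      ring
    have hdfun_eq : dfun n = x N := rfl
    have hAfun_eq : Afun n = a ^ k * (G (x N) - G (x (J-1))) := by
      simp only [hAdef]
      rw [hcfun_eq, hdfun_eq]
    rw [Real.norm_eq_abs]
    have harg : (1/nn) * (∑ j ∈ Finset.Icc (1:ℤ) N, ∏ κ : Fin k,
          nn * ((max ((j:ℝ)/nn - s κ) 0) ^ a - (max (((j:ℝ)-1)/nn - s κ) 0) ^ a)) - Afun n
        = (∑ j ∈ Finset.Ioc (0:ℤ) (J-1), g j)
          + ((∑ j ∈ Finset.Ioc (J-1) N, g j) - a ^ k * ∫ u in (x (J-1))..(x N), P u) := by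
      rw [hSn, hAfun_eq, hGint]
      ring
    rw [harg]
    refine le_trans (abs_add_le _ _) ?_
    have hAabs : |∑ j ∈ Finset.Ioc (0:ℤ) (J-1), g j| = ∑ j ∈ Finset.Ioc (0:ℤ) (J-1), g j :=
      abs_of_nonneg (Finset.sum_nonneg fun j _ => hg_nonneg j)
    rw [hAabs, hEdef]
    have := le_trans hB herr
    linarith [hAsum]
  have hdiff := squeeze_zero_norm' hbound hEfun_lim
  have hfinal := hdiff.add hAfun_lim
  rw [zero_add] at hfinal
  rw [hIv]
  exact hfinal.congr (fun n => by ring)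
end

section
/- Let $p \geq 2$ be an integer, $k_1 \leq k_2 \leq \cdots \leq k_p$ positive integers, and let $G$ be a diagram of order $(k_1, \ldots, k_p)$: a perfect matching on the vertex set $V_G = \bigcup_{j=1}^p \{(j,1), \ldots, (j,k_j)\}$ such that no edge joins two vertices with the same first coordinate. For $j \in \{1, \ldots, p\}$ let $k_G(j)$ be the number of edges $e$ whose lower level $\lambda_1(e)$ (the smaller of the two first coordinates of the endpoints of $e$) equals $j$. Then $\sum_{j=1}^p \frac{k_G(j)}{k_j} \geq \frac{p}{2}$. -/
theorem stmt13 (p : ℕ) (hp : 2 ≤ p) (k : Fin p → ℕ) (hk : ∀ j, 1 ≤ k j)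
    (hmono : Monotone k)
    (M : (Σ j : Fin p, Fin (k j)) → (Σ j : Fin p, Fin (k j)))
    (hinv : ∀ v, M (M v) = v) (hne : ∀ v, M v ≠ v)
    (hlevel : ∀ v, (M v).1 ≠ v.1) :
    (p : ℝ) / 2 ≤ ∑ j : Fin p,
      (Set.ncard {v : Σ j : Fin p, Fin (k j) | v.1 = j ∧ v.1 < (M v).1} : ℝ) / (k j : ℝ) := by
  classical
  have hkpos : ∀ j, (0:ℝ) < k j := fun j => by exact_mod_cast hk j
  set f : (Σ j : Fin p, Fin (k j)) → ℝ :=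
    fun v => if v.1 < (M v).1 then 1 / (k v.1 : ℝ) else 0 with hf
  have hMbij : Function.Bijective M := Function.Involutive.bijective hinv
  -- RHS equals ∑ v, f v
  have h1 : ∑ j : Fin p,
      (Set.ncard {v : Σ j : Fin p, Fin (k j) | v.1 = j ∧ v.1 < (M v).1} : ℝ) / (k j : ℝ)
      = ∑ v, f v := by
    have hstep : ∀ j : Fin p,
        (Set.ncard {v : Σ j : Fin p, Fin (k j) | v.1 = j ∧ v.1 < (M v).1} : ℝ) / (k j : ℝ)
        = ∑ v : (Σ j : Fin p, Fin (k j)),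
            if v.1 = j ∧ v.1 < (M v).1 then 1 / (k j : ℝ) else 0 := by
      intro j
      rw [Finset.sum_ite, Finset.sum_const, Finset.sum_const_zero, add_zero,
        Set.ncard_eq_toFinset_card']
      simp only [Set.toFinset_setOf, nsmul_eq_mul]
      rw [div_eq_mul_one_div]
    rw [Finset.sum_congr rfl (fun j _ => hstep j), Finset.sum_comm]
    refine Finset.sum_congr rfl (fun v _ => ?_)
    by_cases hL : v.1 < (M v).1
    · simp only [hL, and_true, hf]
      rw [Finset.sum_ite_eq]
      simp [hL]
    · simp [hL, hf]
  rw [h1]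
  -- ∑ f v = ∑ f (M v)
  have h2 : ∑ v, f (M v) = ∑ v, f v := Function.Bijective.sum_comp hMbij f
  have h3 : ∑ v, f v = ∑ v, (f v + f (M v)) / 2 := by
    rw [← Finset.sum_div, Finset.sum_add_distrib, h2]
    ring
  rw [h3]
  -- pointwise bound
  have h4 : ∀ v : (Σ j : Fin p, Fin (k j)), 1 / (2 * (k v.1 : ℝ)) ≤ (f v + f (M v)) / 2 := by
    intro v
    rcases lt_trichotomy v.1 (M v).1 with h | h | h
    · have h' : ¬ (M v).1 < (M (M v)).1 := by rw [hinv]; exact not_lt.2 h.le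
      simp only [hf, h, h', if_true, if_false]
      rw [add_zero, div_div, mul_comm]
    · exact absurd h.symm (hlevel v)
    · have h' : (M v).1 < (M (M v)).1 := by rw [hinv]; exact h
      have hle : (k (M v).1 : ℝ) ≤ k v.1 := by exact_mod_cast hmono h.le
      simp only [hf, not_lt.2 h.le, h', if_true, if_false]
      rw [zero_add, div_div]
      exact one_div_le_one_div_of_le (by nlinarith [hkpos (M v).1])
        (by nlinarith [hkpos (M v).1])
  refine le_trans (le_of_eq ?_) (Finset.sum_le_sum (fun v _ => h4 v))
  -- ∑ v, 1/(2 k v.1) = p/2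
  rw [show (Finset.univ : Finset ((j : Fin p) × Fin (k j)))
      = Finset.univ.sigma (fun _ => Finset.univ) from rfl, Finset.sum_sigma]
  have : ∀ j : Fin p, ∑ _i : Fin (k j), 1 / (2 * (k j : ℝ)) = 1 / 2 := by
    intro j
    rw [Finset.sum_const, Finset.card_univ, Fintype.card_fin, nsmul_eq_mul,
      mul_one_div, div_eq_div_iff (by nlinarith [hkpos j]) (by norm_num : (2:ℝ) ≠ 0)]
    ring
  rw [Finset.sum_congr rfl (fun j _ => this j), Finset.sum_const, Finset.card_univ,
    Fintype.card_fin, nsmul_eq_mul]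
  ring
end

section
/- Let $\rho : \mathbb{Z} \to [-1,1]$ with $\rho(0) = 1$ and $\rho(-j) = \rho(j)$, and let $k \geq 2$ and $1 \leq r \leq k-1$ be integers such that $\sum_{j \in \mathbb{Z}} |\rho(j)|^k < \infty$. Then $\frac{1}{n} \left(\sum_{|j_1| < n} |\rho(j_1)|^r\right)\left(\sum_{|j_2| < n} |\rho(j_2)|^{k-r}\right) \to 0$ as $n \to \infty$. -/
open Filter

lemma stmt16_key (f : ℤ → ℝ) (hf : ∀ j, 0 ≤ f j) (k r : ℕ) (hr : 1 ≤ r) (hrk : r < k)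
    (hsum : Summable (fun j : ℤ => f j ^ k)) :
    Tendsto (fun n : ℕ => (∑ j ∈ Finset.Ioo (-(n : ℤ)) (n : ℤ), f j ^ r)
      / (n : ℝ) ^ (((k - r : ℕ) : ℝ) / (k : ℝ))) atTop (nhds 0) := by
  have hkpos : 0 < k := by omega
  have hk0 : (0 : ℝ) < (k : ℝ) := by exact_mod_cast hkpos
  have hr0 : (0 : ℝ) < (r : ℝ) := by exact_mod_cast hr
  have hkr : ((k - r : ℕ) : ℝ) = (k : ℝ) - (r : ℝ) := by
    push_cast [Nat.cast_sub hrk.le]; ring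
  set β : ℝ := ((k - r : ℕ) : ℝ) / (k : ℝ) with hβdef
  have hβpos : 0 < β := by
    have : (0 : ℝ) < ((k - r : ℕ) : ℝ) := by
      rw [hkr]; have : (r : ℝ) < (k : ℝ) := by exact_mod_cast hrk
      linarith
    positivity
  rw [Metric.tendsto_atTop]
  intro ε hε
  have h2β : (0 : ℝ) < (2 : ℝ) ^ β := Real.rpow_pos_of_pos two_pos β
  set c : ℝ := ε / (2 * 2 ^ β) with hcdef
  have hc : 0 < c := by positivity
  set ε' : ℝ := min 1 (c ^ k) with hεdef
  have hε'pos : 0 < ε' := lt_min one_pos (by positivity)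
  obtain ⟨S, hS⟩ := summable_iff_vanishing.1 hsum (Metric.ball 0 ε')
    (Metric.ball_mem_nhds _ hε'pos)
  set C : ℝ := ∑ j ∈ S, f j ^ r with hCdef
  have hC : 0 ≤ C := Finset.sum_nonneg fun j _ => pow_nonneg (hf j) r
  have h1 : Tendsto (fun n : ℕ => (n : ℝ) ^ β) atTop atTop :=
    (tendsto_rpow_atTop hβpos).comp tendsto_natCast_atTop_atTop
  have hev : ∀ᶠ n : ℕ in atTop, C / (ε / 2) < (n : ℝ) ^ β ∧ 1 ≤ n :=
    (h1.eventually_gt_atTop _).and (eventually_ge_atTop 1)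
  obtain ⟨N, hN⟩ := eventually_atTop.1 hev
  refine ⟨N, fun n hn => ?_⟩
  obtain ⟨hN1, hN2⟩ := hN n hn
  have hn0 : (0 : ℝ) < (n : ℝ) := by exact_mod_cast hN2
  have hnβ : (0 : ℝ) < (n : ℝ) ^ β := Real.rpow_pos_of_pos hn0 β
  set a : ℝ := ∑ j ∈ Finset.Ioo (-(n : ℤ)) (n : ℤ), f j ^ r with hadef
  have ha0 : 0 ≤ a := Finset.sum_nonneg fun j _ => pow_nonneg (hf j) r
  -- key inequality: a ≤ C + ε'^(r/k) * (2*n)^β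
  have hsplit : a = (∑ j ∈ Finset.Ioo (-(n : ℤ)) (n : ℤ) ∩ S, f j ^ r)
      + ∑ j ∈ Finset.Ioo (-(n : ℤ)) (n : ℤ) \ S, f j ^ r :=
    (Finset.sum_inter_add_sum_sdiff _ _ _).symm
  set t : Finset ℤ := Finset.Ioo (-(n : ℤ)) (n : ℤ) \ S with htdef
  have hpart1 : (∑ j ∈ Finset.Ioo (-(n : ℤ)) (n : ℤ) ∩ S, f j ^ r) ≤ C :=
    Finset.sum_le_sum_of_subset_of_nonneg Finset.inter_subset_right
      (fun j _ _ => pow_nonneg (hf j) r)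
  have htail : (∑ j ∈ t, f j ^ k) < ε' := by
    have := hS t Finset.sdiff_disjoint
    rw [Metric.mem_ball, dist_zero_right, Real.norm_eq_abs] at this
    exact lt_of_le_of_lt (le_abs_self _) this
  have htail0 : 0 ≤ ∑ j ∈ t, f j ^ k := Finset.sum_nonneg fun j _ => pow_nonneg (hf j) k
  -- Hölder on the tail
  have hpq : Real.HolderConjugate ((k : ℝ) / (r : ℝ)) ((k : ℝ) / ((k - r : ℕ) : ℝ)) := by
    rw [Real.holderConjugate_iff]
    constructor
    · rw [lt_div_iff₀ hr0, one_mul]; exact_mod_cast hrk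
    · rw [inv_div, inv_div, hkr]
      field_simp
      ring
  have holder := Real.inner_le_Lp_mul_Lq_of_nonneg (s := t)
    (f := fun j => f j ^ r) (g := fun _ => (1 : ℝ)) hpq
    (fun j _ => pow_nonneg (hf j) r) (fun j _ => zero_le_one)
  have hlhs : (∑ j ∈ t, (fun j => f j ^ r) j * (fun _ => (1 : ℝ)) j) = ∑ j ∈ t, f j ^ r := by
    simp
  have hpow : ∀ j : ℤ, ((f j ^ r) : ℝ) ^ ((k : ℝ) / (r : ℝ)) = f j ^ k := by
    intro j
    rw [← Real.rpow_natCast (f j) r, ← Real.rpow_mul (hf j)]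
    rw [show (r : ℝ) * ((k : ℝ) / (r : ℝ)) = (k : ℝ) by field_simp]
    exact Real.rpow_natCast _ _
  have hterm1 : (∑ j ∈ t, ((f j ^ r) : ℝ) ^ ((k : ℝ) / (r : ℝ))) ^ (1 / ((k : ℝ) / (r : ℝ)))
      ≤ ε' ^ ((r : ℝ) / (k : ℝ)) := by
    rw [one_div_div]
    refine Real.rpow_le_rpow ?_ ?_ (by positivity)
    · exact Finset.sum_nonneg fun j _ => by rw [hpow]; exact pow_nonneg (hf j) k
    · calc (∑ j ∈ t, ((f j ^ r) : ℝ) ^ ((k : ℝ) / (r : ℝ))) = ∑ j ∈ t, f j ^ k := by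
            exact Finset.sum_congr rfl fun j _ => hpow j
        _ ≤ ε' := htail.le
  have hcard : ((t.card : ℝ)) ≤ 2 * (n : ℝ) := by
    have h1 : t.card ≤ (Finset.Ioo (-(n : ℤ)) (n : ℤ)).card := Finset.card_le_card
      (Finset.sdiff_subset)
    have h2 : (Finset.Ioo (-(n : ℤ)) (n : ℤ)).card = ((n : ℤ) - (-(n : ℤ)) - 1).toNat :=
      Int.card_Ioo _ _
    have h3 : (Finset.Ioo (-(n : ℤ)) (n : ℤ)).card ≤ 2 * n := by
      rw [h2]
      omega
    have := le_trans h1 h3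
    push_cast
    exact_mod_cast Nat.cast_le.2 this
  have hterm2 : (∑ j ∈ t, ((1 : ℝ)) ^ ((k : ℝ) / ((k - r : ℕ) : ℝ)))
      ^ (1 / ((k : ℝ) / ((k - r : ℕ) : ℝ))) ≤ (2 * (n : ℝ)) ^ β := by
    rw [one_div_div]
    have : (∑ j ∈ t, ((1 : ℝ)) ^ ((k : ℝ) / ((k - r : ℕ) : ℝ))) = (t.card : ℝ) := by
      simp
    rw [this]
    exact Real.rpow_le_rpow (by positivity) hcard hβpos.le
  have htailbound : (∑ j ∈ t, f j ^ r) ≤ ε' ^ ((r : ℝ) / (k : ℝ)) * (2 * (n : ℝ)) ^ β := by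
    calc (∑ j ∈ t, f j ^ r) = ∑ j ∈ t, (fun j => f j ^ r) j * (fun _ => (1 : ℝ)) j := hlhs.symm
      _ ≤ _ := holder
      _ ≤ ε' ^ ((r : ℝ) / (k : ℝ)) * (2 * (n : ℝ)) ^ β := by
          apply mul_le_mul hterm1 hterm2 (by positivity) (by positivity)
  have hkey : a ≤ C + ε' ^ ((r : ℝ) / (k : ℝ)) * (2 * (n : ℝ)) ^ β := by
    rw [hsplit]; exact add_le_add hpart1 htailbound
  -- bound ε'^(r/k) by c
  have hεc : ε' ^ ((r : ℝ) / (k : ℝ)) ≤ c := by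
    have h1 : ε' ^ ((r : ℝ) / (k : ℝ)) ≤ ε' ^ ((1 : ℝ) / (k : ℝ)) := by
      apply Real.rpow_le_rpow_of_exponent_ge hε'pos (min_le_left _ _)
      apply div_le_div_of_nonneg_right _ hk0.le
      exact_mod_cast hr
    have h2 : ε' ^ ((1 : ℝ) / (k : ℝ)) ≤ (c ^ k) ^ ((1 : ℝ) / (k : ℝ)) :=
      Real.rpow_le_rpow hε'pos.le (min_le_right _ _) (by positivity)
    have h3 : (c ^ k) ^ ((1 : ℝ) / (k : ℝ)) = c := by
      rw [← Real.rpow_natCast c k, ← Real.rpow_mul hc.le]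
      rw [show (k : ℝ) * (1 / (k : ℝ)) = 1 by field_simp]
      exact Real.rpow_one c
    linarith
  -- conclude
  rw [Real.dist_eq, sub_zero, abs_of_nonneg (by positivity)]
  have hmul : (2 * (n : ℝ)) ^ β = 2 ^ β * (n : ℝ) ^ β := Real.mul_rpow (by norm_num) hn0.le
  have hfinal : a / (n : ℝ) ^ β ≤ C / (n : ℝ) ^ β + c * 2 ^ β := by
    rw [div_le_iff₀ hnβ, add_mul, div_mul_cancel₀ _ hnβ.ne']
    calc a ≤ C + ε' ^ ((r : ℝ) / (k : ℝ)) * (2 * (n : ℝ)) ^ β := hkey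
      _ ≤ C + c * (2 ^ β * (n : ℝ) ^ β) := by
          rw [← hmul]
          have : ε' ^ ((r : ℝ) / (k : ℝ)) * (2 * (n : ℝ)) ^ β ≤ c * (2 * (n : ℝ)) ^ β :=
            mul_le_mul_of_nonneg_right hεc (by positivity)
          linarith
      _ = C + c * 2 ^ β * (n : ℝ) ^ β := by ring
  have hc2 : c * 2 ^ β = ε / 2 := by
    rw [hcdef]; field_simp
  have hCsmall : C / (n : ℝ) ^ β < ε / 2 := by
    rw [div_lt_iff₀ hnβ]
    have := (div_lt_iff₀ (by linarith : (0 : ℝ) < ε / 2)).1 hN1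
    linarith [this]
  calc a / (n : ℝ) ^ β ≤ C / (n : ℝ) ^ β + c * 2 ^ β := hfinal
    _ < ε / 2 + ε / 2 := by rw [hc2]; linarith
    _ = ε := by ring

theorem stmt16 (ρ : ℤ → ℝ) (hρ : ∀ j, ρ j ∈ Set.Icc (-1 : ℝ) 1)
    (hρ0 : ρ 0 = 1) (hsymm : ∀ j, ρ (-j) = ρ j)
    (k r : ℕ) (hk : 2 ≤ k) (hr : 1 ≤ r) (hrk : r ≤ k - 1)
    (hsum : Summable (fun j : ℤ => |ρ j| ^ k)) :
    Tendsto
      (fun n : ℕ =>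
        (1 / (n : ℝ)) * (∑ j₁ ∈ Finset.Ioo (-(n : ℤ)) (n : ℤ), |ρ j₁| ^ r)
          * (∑ j₂ ∈ Finset.Ioo (-(n : ℤ)) (n : ℤ), |ρ j₂| ^ (k - r)))
      atTop (nhds 0) := by
  have hf : ∀ j, (0 : ℝ) ≤ |ρ j| := fun j => abs_nonneg _
  have hrk' : r < k := by omega
  have h1 := stmt16_key (fun j => |ρ j|) hf k r hr hrk' hsum
  have h2 := stmt16_key (fun j => |ρ j|) hf k (k - r) (by omega) (by omega) hsum
  have hkk : k - (k - r) = r := by omega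
  rw [hkk] at h2
  have hkr : ((k - r : ℕ) : ℝ) = (k : ℝ) - (r : ℝ) := by
    push_cast [Nat.cast_sub hrk'.le]; ring
  have hk0 : (0 : ℝ) < (k : ℝ) := by positivity
  have hmul := h1.mul h2
  rw [mul_zero] at hmul
  refine hmul.congr' ?_
  filter_upwards [eventually_ge_atTop 1] with n hn
  have hn0 : (0 : ℝ) < (n : ℝ) := by exact_mod_cast hn
  have hβγ : ((k - r : ℕ) : ℝ) / (k : ℝ) + (r : ℝ) / (k : ℝ) = 1 := by
    rw [hkr]; field_simp
    ring
  have hpow : (n : ℝ) ^ (((k - r : ℕ) : ℝ) / (k : ℝ)) * (n : ℝ) ^ ((r : ℝ) / (k : ℝ))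
      = (n : ℝ) := by
    rw [← Real.rpow_add hn0, hβγ, Real.rpow_one]
  rw [div_mul_div_comm, hpow]
  field_simp
end

section
/- Let $\check{H} \in (1 - \frac{1}{2k}, 1)$ for an integer $k \geq 1$, and let $r_{\check{H}}(j) = \frac{1}{2}(|j+1|^{2\check{H}} - 2|j|^{2\check{H}} + |j-1|^{2\check{H}})$. Then $n^{-2 + 2k(1 - \check{H})} \sum_{j_1=1}^{n} \sum_{j_2=1}^{n} r_{\check{H}}(j_1 - j_2)^{k} \to \frac{\check{H}^k (2\check{H}-1)^k}{(1 - k(1-\check{H}))(1 - 2k(1-\check{H}))}$ as $n \to \infty$. -/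
open Filter

open Finset Asymptotics Topology

-- L1: discrete derivative of rpow
lemma aux_rpow_slope (β : ℝ) :
    Tendsto (fun n : ℕ => (((n:ℝ)+1) ^ β - (n:ℝ) ^ β) / (n:ℝ) ^ (β - 1)) atTop (𝓝 β) := by
  have hd : HasDerivAt (fun x : ℝ => x ^ β) β 1 := by
    have := Real.hasDerivAt_rpow_const (x := 1) (p := β) (Or.inl one_ne_zero)
    simpa using this
  have hs := hasDerivAt_iff_tendsto_slope.1 hd
  have hseq : Tendsto (fun n : ℕ => 1 + 1/(n:ℝ)) atTop (𝓝[≠] (1:ℝ)) := by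
    rw [tendsto_nhdsWithin_iff]
    constructor
    · simpa using (tendsto_const_nhds (x := (1:ℝ))).add tendsto_one_div_atTop_nhds_zero_nat
    · filter_upwards [eventually_gt_atTop 0] with n hn
      have h1 : (0:ℝ) < 1/(n:ℝ) := by positivity
      simp only [Set.mem_compl_iff, Set.mem_singleton_iff]
      intro h; rw [add_eq_left] at h; linarith
  have key := hs.comp hseq
  apply key.congr'
  filter_upwards [eventually_gt_atTop 0] with n hn
  have hn0 : (0:ℝ) < n := by exact_mod_cast hn
  have hP : (0:ℝ) < (n:ℝ) ^ β := Real.rpow_pos_of_pos hn0 β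
  simp only [Function.comp_apply, slope_def_field]
  rw [Real.one_rpow]
  have h1 : ((n:ℝ)+1) ^ β = (n:ℝ) ^ β * (1 + 1/(n:ℝ)) ^ β := by
    rw [← Real.mul_rpow hn0.le (by positivity)]
    congr 1; field_simp
  have h2 : (n:ℝ) ^ (β - 1) = (n:ℝ) ^ β / n := by
    rw [Real.rpow_sub hn0, Real.rpow_one]
  rw [h1, h2]
  field_simp
  ring

lemma aux_sum_rpow_atTop {β : ℝ} (hβ : -1 < β) :
    Tendsto (fun n : ℕ => ∑ i ∈ range n, (i:ℝ) ^ β) atTop atTop := by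
  set β' := min β 0 with hβ'
  have hβ'0 : β' ≤ 0 := min_le_right _ _
  have hβ'1 : -1 < β' := lt_min hβ (by norm_num)
  have hlim : Tendsto (fun n : ℕ => (n:ℝ) ^ (1+β') - 1) atTop atTop := by
    apply tendsto_atTop_add_const_right
    exact (tendsto_rpow_atTop (by linarith)).comp tendsto_natCast_atTop_atTop
  apply tendsto_atTop_mono' _ _ hlim
  filter_upwards [eventually_ge_atTop 1] with n hn
  have hn0 : (0:ℝ) < n := by exact_mod_cast hn
  have step1 : (n:ℝ) ^ (1+β') - 1 ≤ ((n:ℝ) - 1) * (n:ℝ) ^ β' := by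
    have h1 : (n:ℝ) ^ (1+β') = n * (n:ℝ) ^ β' := by
      rw [Real.rpow_add hn0, Real.rpow_one]
    have h2 : (n:ℝ) ^ β' ≤ 1 :=
      Real.rpow_le_one_of_one_le_of_nonpos (by exact_mod_cast hn) hβ'0
    rw [h1]; nlinarith
  have step2 : ((n:ℝ) - 1) * (n:ℝ) ^ β' ≤ ∑ i ∈ range n, (i:ℝ) ^ β := by
    have : ∑ i ∈ Ico 1 n, (n:ℝ) ^ β' ≤ ∑ i ∈ Ico 1 n, (i:ℝ) ^ β := by
      apply Finset.sum_le_sum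
      intro i hi
      rw [Finset.mem_Ico] at hi
      have hi0 : (1:ℝ) ≤ i := by exact_mod_cast hi.1
      have hin : (i:ℝ) ≤ n := by exact_mod_cast (hi.2.le)
      calc (n:ℝ) ^ β' ≤ (i:ℝ) ^ β' :=
            Real.rpow_le_rpow_of_nonpos (by linarith) hin hβ'0
        _ ≤ (i:ℝ) ^ β := Real.rpow_le_rpow_of_exponent_le hi0 (min_le_left _ _)
    have hcard : ∑ i ∈ Ico 1 n, (n:ℝ) ^ β' = ((n:ℝ) - 1) * (n:ℝ) ^ β' := by
      rw [Finset.sum_const, Nat.card_Ico]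
      have : ((n - 1 : ℕ) : ℝ) = (n:ℝ) - 1 := by
        have : 1 ≤ n := hn
        push_cast [this]; ring
      rw [nsmul_eq_mul, this]
    have hsub : ∑ i ∈ Ico 1 n, (i:ℝ) ^ β ≤ ∑ i ∈ range n, (i:ℝ) ^ β := by
      apply Finset.sum_le_sum_of_subset_of_nonneg
      · rw [Finset.range_eq_Ico]; exact Finset.Ico_subset_Ico (by omega) le_rfl
      · intro i _ _; positivity
    linarith [hcard ▸ this]
  linarith

lemma aux_sum_rpow_lim {β : ℝ} (hβ : -1 < β) :
    Tendsto (fun n : ℕ => (∑ i ∈ range n, (i:ℝ) ^ β) / (n:ℝ) ^ (β+1)) atTop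
      (𝓝 (1/(β+1))) := by
  have hβ1 : (0:ℝ) < β + 1 := by linarith
  set g : ℕ → ℝ := fun i => (i:ℝ) ^ β with hg
  set f : ℕ → ℝ := fun i =>
    g i - (((i:ℝ)+1) ^ (β+1) - (i:ℝ) ^ (β+1)) / (β+1) with hf
  have hgnn : ∀ i, 0 ≤ g i := fun i => Real.rpow_nonneg (Nat.cast_nonneg i) β
  have hdiv := aux_sum_rpow_atTop hβ
  have hlo : f =o[atTop] g := by
    rw [isLittleO_iff_tendsto']
    · have hA : Tendsto (fun n : ℕ =>
          (((n:ℝ)+1) ^ (β+1) - (n:ℝ) ^ (β+1)) / (n:ℝ) ^ β) atTop (𝓝 (β+1)) := by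
        have := aux_rpow_slope (β+1)
        simpa using this
      have : Tendsto (fun n : ℕ => 1 - (((n:ℝ)+1) ^ (β+1) - (n:ℝ) ^ (β+1)) / (n:ℝ) ^ β / (β+1))
          atTop (𝓝 (1 - (β+1)/(β+1))) :=
        tendsto_const_nhds.sub (hA.div_const (β+1))
      rw [show (1:ℝ) - (β+1)/(β+1) = 0 by field_simp; ring] at this
      apply this.congr'
      filter_upwards [eventually_gt_atTop 0] with n hn
      have hn0 : (0:ℝ) < n := by exact_mod_cast hn
      have hP : (0:ℝ) < (n:ℝ) ^ β := Real.rpow_pos_of_pos hn0 β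
      simp only [hf, hg]
      field_simp
    · filter_upwards [eventually_gt_atTop 0] with n hn
      intro h
      have hn0 : (0:ℝ) < n := by exact_mod_cast hn
      exact absurd h (Real.rpow_pos_of_pos hn0 β).ne'
  have hsum : ∀ n, ∑ i ∈ range n, f i = (∑ i ∈ range n, g i) - (n:ℝ) ^ (β+1) / (β+1) := by
    intro n
    have htel : ∑ i ∈ range n, ((((i:ℝ)+1) ^ (β+1)) / (β+1) - ((i:ℝ) ^ (β+1)) / (β+1))
        = ((n:ℝ) ^ (β+1)) / (β+1) - ((0:ℝ) ^ (β+1)) / (β+1) := by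
      have := Finset.sum_range_sub (f := fun i => ((i:ℝ) ^ (β+1)) / (β+1)) n
      simpa using this
    rw [show ((0:ℝ) ^ (β+1)) = 0 from Real.zero_rpow hβ1.ne', zero_div, sub_zero] at htel
    simp only [hf]
    rw [Finset.sum_sub_distrib, ← htel]
    congr 1
    exact Finset.sum_congr rfl fun i _ => by ring
  have hlosum := hlo.sum_range hgnn hdiv
  have hratio : Tendsto (fun n => (∑ i ∈ range n, f i) / (∑ i ∈ range n, g i)) atTop (𝓝 0) :=
    hlosum.tendsto_div_nhds_zero
  -- q n := 1 - ratio → 1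
  have hq : Tendsto (fun n => 1 - (∑ i ∈ range n, f i) / (∑ i ∈ range n, g i)) atTop (𝓝 1) := by
    have := (tendsto_const_nhds (x := (1:ℝ))).sub hratio
    simpa using this
  have hqinv : Tendsto (fun n => (1 - (∑ i ∈ range n, f i) / (∑ i ∈ range n, g i))⁻¹ / (β+1))
      atTop (𝓝 (1/(β+1))) := by
    have := (hq.inv₀ (by norm_num)).div_const (β+1)
    simpa using this
  apply hqinv.congr'
  filter_upwards [hdiv.eventually_ge_atTop 1, eventually_gt_atTop 0] with n hS hn
  have hn0 : (0:ℝ) < n := by exact_mod_cast hn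
  have hS0 : (0:ℝ) < ∑ i ∈ range n, g i := by linarith
  have hP : (0:ℝ) < (n:ℝ) ^ (β+1) := Real.rpow_pos_of_pos hn0 _
  have h2 : ∑ i ∈ range n, g i - ∑ i ∈ range n, f i = (n:ℝ)^(β+1)/(β+1) := by
    rw [hsum n]; ring
  have h1 : 1 - (∑ i ∈ range n, f i)/(∑ i ∈ range n, g i)
      = ((n:ℝ)^(β+1)/(β+1))/(∑ i ∈ range n, g i) := by
    rw [← h2, sub_div, div_self hS0.ne']
  rw [h1, inv_div, div_div, div_mul_cancel₀ _ hβ1.ne']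

lemma aux_cesaro {b : ℕ → ℝ} {β c : ℝ} (hβ : -1 < β)
    (hb : Tendsto (fun n : ℕ => b n / (n:ℝ) ^ β) atTop (𝓝 c)) :
    Tendsto (fun n : ℕ => (∑ i ∈ range n, b i) / (n:ℝ) ^ (β+1)) atTop (𝓝 (c/(β+1))) := by
  set g : ℕ → ℝ := fun i => (i:ℝ) ^ β with hg
  set f : ℕ → ℝ := fun i => b i - c * g i with hf
  have hgnn : ∀ i, 0 ≤ g i := fun i => Real.rpow_nonneg (Nat.cast_nonneg i) β
  have hdiv := aux_sum_rpow_atTop hβ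
  have hlo : f =o[atTop] g := by
    rw [isLittleO_iff_tendsto']
    · have : Tendsto (fun n : ℕ => b n / (n:ℝ) ^ β - c) atTop (𝓝 (c - c)) :=
        hb.sub tendsto_const_nhds
      rw [sub_self] at this
      apply this.congr'
      filter_upwards [eventually_gt_atTop 0] with n hn
      have hn0 : (0:ℝ) < n := by exact_mod_cast hn
      have hP : (0:ℝ) < (n:ℝ) ^ β := Real.rpow_pos_of_pos hn0 β
      simp only [hf, hg]
      field_simp
    · filter_upwards [eventually_gt_atTop 0] with n hn
      intro h
      have hn0 : (0:ℝ) < n := by exact_mod_cast hn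
      exact absurd h (Real.rpow_pos_of_pos hn0 β).ne'
  have hratio : Tendsto (fun n => (∑ i ∈ range n, f i) / (∑ i ∈ range n, g i)) atTop (𝓝 0) :=
    (hlo.sum_range hgnn hdiv).tendsto_div_nhds_zero
  have hL2 := aux_sum_rpow_lim hβ
  have key : Tendsto (fun n : ℕ =>
      (∑ i ∈ range n, f i) / (∑ i ∈ range n, g i) * ((∑ i ∈ range n, g i) / (n:ℝ) ^ (β+1))
        + c * ((∑ i ∈ range n, g i) / (n:ℝ) ^ (β+1))) atTop
      (𝓝 (0 * (1/(β+1)) + c * (1/(β+1)))) :=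
    (hratio.mul hL2).add (hL2.const_mul c)
  rw [show (0:ℝ) * (1/(β+1)) + c * (1/(β+1)) = c/(β+1) by ring] at key
  apply key.congr'
  filter_upwards [hdiv.eventually_ge_atTop 1, eventually_gt_atTop 0] with n hS hn
  have hn0 : (0:ℝ) < n := by exact_mod_cast hn
  have hP : (0:ℝ) < (n:ℝ) ^ (β+1) := Real.rpow_pos_of_pos hn0 _
  have hS0 : (0:ℝ) < ∑ i ∈ range n, g i := by
    simp only [hg]; linarith
  have hsum : ∑ i ∈ range n, f i = (∑ i ∈ range n, b i) - c * ∑ i ∈ range n, g i := by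
    simp only [hf, Finset.sum_sub_distrib, Finset.mul_sum]
  rw [hsum]
  field_simp
  ring

lemma aux_phi (p : ℝ) :
    Tendsto (fun x : ℝ => ((1+x) ^ p + (1-x) ^ p - 2) / x ^ 2) (𝓝[>] (0:ℝ))
      (𝓝 (p * (p-1))) := by
  have hmem : Set.Ioo (0:ℝ) (1/2) ∈ 𝓝[>] (0:ℝ) :=
    Ioo_mem_nhdsGT_of_mem (by constructor <;> norm_num)
  have c1 : ∀ q : ℝ, ContinuousAt (fun x : ℝ => (1+x) ^ q) 0 := by
    intro q
    have hb : ContinuousAt (fun x : ℝ => 1+x) 0 := by fun_prop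
    have h : ContinuousAt (fun y : ℝ => y ^ q) ((fun x : ℝ => 1+x) 0) := by
      simpa using Real.continuousAt_rpow_const 1 q (Or.inl one_ne_zero)
    exact h.comp hb
  have c2 : ∀ q : ℝ, ContinuousAt (fun x : ℝ => (1-x) ^ q) 0 := by
    intro q
    have hb : ContinuousAt (fun x : ℝ => 1-x) 0 := by fun_prop
    have h : ContinuousAt (fun y : ℝ => y ^ q) ((fun x : ℝ => 1-x) 0) := by
      simpa using Real.continuousAt_rpow_const 1 q (Or.inl one_ne_zero)
    exact h.comp hb
  have hderiv1 : ∀ x ∈ Set.Ioo (0:ℝ) (1/2),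
      HasDerivAt (fun x : ℝ => (1+x) ^ p + (1-x) ^ p - 2)
        (p * (1+x) ^ (p-1) - p * (1-x) ^ (p-1)) x := by
    intro x hx
    have h1 : HasDerivAt (fun x : ℝ => (1+x) ^ p) (p * (1+x) ^ (p-1)) x := by
      have hb : HasDerivAt (fun x : ℝ => 1+x) 1 x := (hasDerivAt_id x).const_add 1
      have := hb.rpow_const (p := p) (Or.inl (by nlinarith [hx.1] : (1:ℝ)+x ≠ 0))
      simpa using this
    have h2 : HasDerivAt (fun x : ℝ => (1-x) ^ p) (-(p * (1-x) ^ (p-1))) x := by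
      have hb : HasDerivAt (fun x : ℝ => 1-x) (-1) x := by
        simpa using ((hasDerivAt_id x).const_sub 1)
      have := hb.rpow_const (p := p) (Or.inl (by nlinarith [hx.2] : (1:ℝ)-x ≠ 0))
      convert this using 1 <;> ring
    have := (h1.add h2).sub_const 2
    exact this.congr_deriv (by ring)
  have hderiv2 : ∀ x ∈ Set.Ioo (0:ℝ) (1/2),
      HasDerivAt (fun x : ℝ => p * (1+x) ^ (p-1) - p * (1-x) ^ (p-1))
        (p * ((p-1) * (1+x) ^ (p-1-1)) + p * ((p-1) * (1-x) ^ (p-1-1))) x := by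
    intro x hx
    have h1 : HasDerivAt (fun x : ℝ => (1+x) ^ (p-1)) ((p-1) * (1+x) ^ (p-1-1)) x := by
      have hb : HasDerivAt (fun x : ℝ => 1+x) 1 x := (hasDerivAt_id x).const_add 1
      have := hb.rpow_const (p := p-1) (Or.inl (by nlinarith [hx.1] : (1:ℝ)+x ≠ 0))
      simpa using this
    have h2 : HasDerivAt (fun x : ℝ => (1-x) ^ (p-1)) (-((p-1) * (1-x) ^ (p-1-1))) x := by
      have hb : HasDerivAt (fun x : ℝ => 1-x) (-1) x := by
        simpa using ((hasDerivAt_id x).const_sub 1)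
      have := hb.rpow_const (p := p-1) (Or.inl (by nlinarith [hx.2] : (1:ℝ)-x ≠ 0))
      convert this using 1 <;> ring
    have := (h1.const_mul p).sub (h2.const_mul p)
    exact this.congr_deriv (by ring)
  have hlh2 : Tendsto (fun x : ℝ => (p * (1+x) ^ (p-1) - p * (1-x) ^ (p-1)) / (2*x))
      (𝓝[>] (0:ℝ)) (𝓝 (p * (p-1))) := by
    apply HasDerivAt.lhopital_zero_nhdsGT
      (f' := fun x => p * ((p-1) * (1+x) ^ (p-1-1)) + p * ((p-1) * (1-x) ^ (p-1-1)))
      (g' := fun _ => 2)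
    · filter_upwards [hmem] with x hx
      exact hderiv2 x hx
    · filter_upwards [hmem] with x hx
      simpa using (hasDerivAt_id x).const_mul 2
    · filter_upwards [hmem] with x hx
      norm_num
    · have hc : ContinuousAt (fun x : ℝ => p * (1+x) ^ (p-1) - p * (1-x) ^ (p-1)) 0 :=
        ((c1 (p-1)).const_mul p).sub ((c2 (p-1)).const_mul p)
      have := tendsto_nhdsWithin_of_tendsto_nhds (s := Set.Ioi (0:ℝ)) hc.tendsto
      simpa [Real.one_rpow] using this
    · have : Tendsto (fun x : ℝ => 2*x) (𝓝 (0:ℝ)) (𝓝 (2*(0:ℝ))) :=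
        (continuous_const.mul continuous_id).tendsto 0
      rw [mul_zero] at this
      exact tendsto_nhdsWithin_of_tendsto_nhds (s := Set.Ioi (0:ℝ)) this
    · have hc : ContinuousAt (fun x : ℝ =>
          (p * ((p-1) * (1+x) ^ (p-1-1)) + p * ((p-1) * (1-x) ^ (p-1-1))) / 2) 0 :=
        ((((c1 (p-1-1)).const_mul (p-1)).const_mul p).add
          (((c2 (p-1-1)).const_mul (p-1)).const_mul p)).div_const 2
      have := tendsto_nhdsWithin_of_tendsto_nhds (s := Set.Ioi (0:ℝ)) hc.tendsto
      convert this using 2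
      norm_num [Real.one_rpow]
  apply HasDerivAt.lhopital_zero_nhdsGT
    (f' := fun x => p * (1+x) ^ (p-1) - p * (1-x) ^ (p-1))
    (g' := fun x => 2*x)
  · filter_upwards [hmem] with x hx
    exact hderiv1 x hx
  · filter_upwards [hmem] with x hx
    simpa using hasDerivAt_pow 2 x
  · filter_upwards [hmem] with x hx
    have := hx.1
    positivity
  · have hc : ContinuousAt (fun x : ℝ => (1+x) ^ p + (1-x) ^ p - 2) 0 :=
      ((c1 p).add (c2 p)).sub continuousAt_const
    have := tendsto_nhdsWithin_of_tendsto_nhds (s := Set.Ioi (0:ℝ)) hc.tendsto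
    convert this using 2
    norm_num [Real.one_rpow]
  · have : Tendsto (fun x : ℝ => x ^ 2) (𝓝 (0:ℝ)) (𝓝 ((0:ℝ) ^ 2)) :=
      (continuous_pow 2).tendsto 0
    rw [show ((0:ℝ) ^ 2) = 0 by norm_num] at this
    exact tendsto_nhdsWithin_of_tendsto_nhds (s := Set.Ioi (0:ℝ)) this
  · exact hlh2

lemma aux_corr_lim (H : ℝ) :
    Tendsto (fun n : ℕ => fgnCorr H n / (n:ℝ) ^ (2*H-2)) atTop (𝓝 (H * (2*H-1))) := by
  have hseq : Tendsto (fun n : ℕ => 1/(n:ℝ)) atTop (𝓝[>] (0:ℝ)) := by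
    rw [tendsto_nhdsWithin_iff]
    constructor
    · exact tendsto_one_div_atTop_nhds_zero_nat
    · filter_upwards [eventually_gt_atTop 0] with n hn
      have : (0:ℝ) < 1/(n:ℝ) := by positivity
      exact this
  have key := (aux_phi (2*H)).comp hseq
  have key2 := key.div_const 2
  rw [show (2*H) * (2*H-1) / 2 = H * (2*H-1) by ring] at key2
  apply key2.congr'
  filter_upwards [eventually_ge_atTop 1] with n hn
  have hn0 : (0:ℝ) < n := by exact_mod_cast hn
  have hn1 : (1:ℝ) ≤ n := by exact_mod_cast hn
  have hx0 : (0:ℝ) < 1/(n:ℝ) := by positivity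
  have hx1 : 1/(n:ℝ) ≤ 1 := by
    rw [div_le_one hn0]; exact hn1
  simp only [Function.comp_apply]
  have habs1 : |(n:ℝ) + 1| = (n:ℝ) + 1 := abs_of_pos (by linarith)
  have habs2 : |(n:ℝ)| = (n:ℝ) := abs_of_pos hn0
  have habs3 : |(n:ℝ) - 1| = (n:ℝ) - 1 := abs_of_nonneg (by linarith)
  have h1 : ((n:ℝ) + 1) ^ (2*H) = (n:ℝ) ^ (2*H) * (1 + 1/(n:ℝ)) ^ (2*H) := by
    rw [← Real.mul_rpow hn0.le (by positivity)]
    congr 1; field_simp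
  have h2 : ((n:ℝ) - 1) ^ (2*H) = (n:ℝ) ^ (2*H) * (1 - 1/(n:ℝ)) ^ (2*H) := by
    rw [← Real.mul_rpow hn0.le (by linarith)]
    congr 1; field_simp
  have h3 : (n:ℝ) ^ (2*H-2) = (n:ℝ) ^ (2*H) / (n:ℝ) ^ (2:ℕ) := by
    rw [← Real.rpow_natCast (n:ℝ) 2, ← Real.rpow_sub hn0]
    norm_num
  have hP : (0:ℝ) < (n:ℝ) ^ (2*H) := Real.rpow_pos_of_pos hn0 _
  rw [fgnCorr]
  push_cast
  rw [habs1, habs2, habs3, h1, h2, h3]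
  have hn2 : (0:ℝ) < (n:ℝ) ^ (2:ℕ) := by positivity
  field_simp
  ring

lemma aux_corr_even (H : ℝ) (d : ℤ) : fgnCorr H (-d) = fgnCorr H d := by
  unfold fgnCorr
  push_cast
  rw [show -(d:ℝ) + 1 = -((d:ℝ) - 1) by ring, show -(d:ℝ) - 1 = -((d:ℝ) + 1) by ring,
    abs_neg, abs_neg, abs_neg]
  ring

-- double-sum identity
lemma aux_dbl (F : ℤ → ℝ) (hF : ∀ d, F (-d) = F d) (n : ℕ) :
    ∑ a ∈ range n, ∑ b ∈ range n, F ((a:ℤ) - (b:ℤ))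
      = 2 * n * (∑ i ∈ range n, F (i:ℤ)) - 2 * (∑ i ∈ range n, (i:ℝ) * F (i:ℤ))
        - n * F 0 := by
  induction n with
  | zero => simp
  | succ n ih =>
    have hrefl1 : ∑ b ∈ range (n+1), F ((n:ℤ) - (b:ℤ)) = ∑ i ∈ range (n+1), F (i:ℤ) := by
      rw [← Finset.sum_range_reflect (fun j => F (j:ℤ)) (n+1)]
      apply Finset.sum_congr rfl
      intro b hb
      rw [Finset.mem_range] at hb
      congr 1
      have : ((n + 1 - 1 - b : ℕ) : ℤ) = (n:ℤ) - (b:ℤ) := by omega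
      rw [this]
    have hrefl2 : ∑ a ∈ range n, F ((a:ℤ) - ((n:ℕ):ℤ)) = ∑ i ∈ range n, F ((i:ℤ)+1) := by
      rw [← Finset.sum_range_reflect (fun j => F ((j:ℤ)+1)) n]
      apply Finset.sum_congr rfl
      intro a ha
      rw [Finset.mem_range] at ha
      rw [show (a:ℤ) - ((n:ℕ):ℤ) = -(((n-1-a:ℕ):ℤ)+1) by omega, hF]
    have hshift : ∑ i ∈ range n, F ((i:ℤ)+1) = (∑ i ∈ range (n+1), F (i:ℤ)) - F 0 := by
      have := Finset.sum_range_succ' (fun i => F (i:ℤ)) n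
      rw [this]
      push_cast
      ring
    rw [Finset.sum_range_succ]
    have hinner : ∀ a ∈ range n, ∑ b ∈ range (n+1), F ((a:ℤ) - (b:ℤ))
        = (∑ b ∈ range n, F ((a:ℤ) - (b:ℤ))) + F ((a:ℤ) - (n:ℤ)) := by
      intro a _
      rw [Finset.sum_range_succ]
    rw [Finset.sum_congr rfl hinner, Finset.sum_add_distrib, ih, hrefl1]
    have : ∑ a ∈ range n, F ((a:ℤ) - ((n:ℕ):ℤ)) = (∑ i ∈ range (n+1), F (i:ℤ)) - F 0 := by
      rw [hrefl2, hshift]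
    rw [this]
    rw [Finset.sum_range_succ (fun i => F (i:ℤ)) n,
      Finset.sum_range_succ (fun i => (i:ℝ) * F (i:ℤ)) n]
    push_cast
    ring

-- Icc to range conversion
lemma aux_icc (f : ℤ → ℝ) (n : ℕ) :
    ∑ j ∈ Finset.Icc (1:ℤ) (n:ℤ), f j = ∑ i ∈ range n, f ((i:ℤ)+1) := by
  induction n with
  | zero => simp
  | succ n ih =>
    rw [Finset.sum_range_succ, ← ih]
    have h : ((n:ℤ)+1) = ((n+1:ℕ):ℤ) := by push_cast; ring
    rw [← h]
    rw [show Finset.Icc (1:ℤ) ((n:ℤ)+1) = insert ((n:ℤ)+1) (Finset.Icc (1:ℤ) (n:ℤ)) by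
      ext x
      simp only [Finset.mem_Icc, Finset.mem_insert]
      omega]
    rw [Finset.sum_insert (by simp)]
    ring

theorem stmt17 (k : ℕ) (hk : 1 ≤ k) (H : ℝ)
    (hH1 : 1 - 1 / (2 * (k : ℝ)) < H) (hH2 : H < 1) :
    Tendsto
      (fun n : ℕ =>
        (n : ℝ) ^ (-2 + 2 * (k : ℝ) * (1 - H)) *
          ∑ j₁ ∈ Finset.Icc (1 : ℤ) (n : ℤ), ∑ j₂ ∈ Finset.Icc (1 : ℤ) (n : ℤ),
            fgnCorr H (j₁ - j₂) ^ k)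
      atTop
      (nhds (H ^ k * (2 * H - 1) ^ k /
        ((1 - (k : ℝ) * (1 - H)) * (1 - 2 * (k : ℝ) * (1 - H))))) := by
  have hk0 : (0:ℝ) < k := by exact_mod_cast hk
  have hk1 : (1:ℝ) ≤ k := by exact_mod_cast hk
  have h2k : 2*(k:ℝ)*(1-H) < 1 := by
    have h : 1 - H < 1/(2*(k:ℝ)) := by linarith
    have h2 : 2*(k:ℝ)*(1-H) < 2*(k:ℝ)*(1/(2*(k:ℝ))) :=
      mul_lt_mul_of_pos_left h (by positivity)
    have h3 : 2*(k:ℝ)*(1/(2*(k:ℝ))) = 1 := by field_simp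
    linarith
  have hH12 : 1/2 < H := by
    have : 1/(2*(k:ℝ)) ≤ 1/2 := one_div_le_one_div_of_le (by norm_num) (by linarith)
    linarith
  set α : ℝ := (k:ℝ)*(2*H-2) with hαdef
  have hα : α = -(2*(k:ℝ)*(1-H)) := by rw [hαdef]; ring
  have hα1 : -1 < α := by rw [hα]; linarith
  have hα1' : 0 < α + 1 := by linarith
  set c : ℝ := (H*(2*H-1))^k with hcdef
  have hL4 : Tendsto (fun n : ℕ => (fgnCorr H n)^k / (n:ℝ)^α) atTop (𝓝 c) := by
    have hp := (aux_corr_lim H).pow k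
    apply hp.congr'
    filter_upwards [eventually_gt_atTop 0] with n hn
    have hn0 : (0:ℝ) < n := by exact_mod_cast hn
    rw [div_pow, ← Real.rpow_natCast ((n:ℝ)^(2*H-2)) k, ← Real.rpow_mul hn0.le]
    rw [show (2*H-2)*(k:ℝ) = α by rw [hαdef]; ring]
  have hT := aux_cesaro hα1 hL4
  have hL4' : Tendsto (fun n : ℕ => ((n:ℝ) * (fgnCorr H n)^k) / (n:ℝ)^(α+1)) atTop
      (𝓝 c) := by
    apply hL4.congr'
    filter_upwards [eventually_gt_atTop 0] with n hn
    have hn0 : (0:ℝ) < n := by exact_mod_cast hn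
    have hP : (0:ℝ) < (n:ℝ)^α := Real.rpow_pos_of_pos hn0 _
    rw [Real.rpow_add_one hn0.ne']
    field_simp
  have hU := aux_cesaro (by linarith : (-1:ℝ) < α+1) hL4'
  simp only [show ((α+1)+1 : ℝ) = α+2 from by ring] at hU
  have h3 : Tendsto (fun n : ℕ => ((n:ℝ)^(α+1))⁻¹) atTop (𝓝 0) := by
    have := (tendsto_rpow_atTop hα1').comp tendsto_natCast_atTop_atTop
    exact this.inv_tendsto_atTop
  have key := ((hT.const_mul 2).sub (hU.const_mul 2)).sub h3
  have hne1 : (0:ℝ) < 1 - 2*(k:ℝ)*(1-H) := by linarith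
  have hne2 : (0:ℝ) < 1 - (k:ℝ)*(1-H) := by linarith
  have hconst : 2*(c/(α+1)) - 2*(c/(α+2)) - 0
      = H^k*(2*H-1)^k/((1-(k:ℝ)*(1-H))*(1-2*(k:ℝ)*(1-H))) := by
    have h1 : α + 1 = 1 - 2*(k:ℝ)*(1-H) := by rw [hα]; ring
    have h2 : α + 2 = 2*(1-(k:ℝ)*(1-H)) := by rw [hα]; ring
    have hc : c = H^k*(2*H-1)^k := by rw [hcdef, mul_pow]
    rw [h1, h2, hc]
    field_simp
    ring
  rw [hconst] at key
  apply key.congr'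
  filter_upwards [eventually_ge_atTop 1] with n hn
  have hn0 : (0:ℝ) < n := by exact_mod_cast hn
  have hF0 : fgnCorr H (0:ℤ) ^ k = 1 := by
    have h0 : fgnCorr H (0:ℤ) = 1 := by
      unfold fgnCorr
      rw [show ((0:ℤ):ℝ) = 0 by norm_num]
      rw [show |(0:ℝ) + 1| = 1 by norm_num, show |(0:ℝ)| = 0 by norm_num,
        show |(0:ℝ) - 1| = 1 by norm_num]
      rw [Real.zero_rpow (by linarith : 2*H ≠ 0), Real.one_rpow]
      norm_num
    rw [h0, one_pow]
  have hicc : (∑ j₁ ∈ Finset.Icc (1:ℤ) (n:ℤ), ∑ j₂ ∈ Finset.Icc (1:ℤ) (n:ℤ),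
        fgnCorr H (j₁-j₂) ^ k)
      = ∑ a ∈ range n, ∑ b ∈ range n, fgnCorr H ((a:ℤ)-(b:ℤ)) ^ k := by
    rw [aux_icc (fun j₁ => ∑ j₂ ∈ Finset.Icc (1:ℤ) (n:ℤ), fgnCorr H (j₁-j₂)^k) n]
    apply Finset.sum_congr rfl
    intro a _
    rw [aux_icc (fun j₂ => fgnCorr H ((a:ℤ)+1-j₂)^k) n]
    apply Finset.sum_congr rfl
    intro b _
    congr 2
    ring
  have hdbl := aux_dbl (fun d => fgnCorr H d ^ k)
    (fun d => by
      show fgnCorr H (-d) ^ k = fgnCorr H d ^ k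
      rw [aux_corr_even]) n
  rw [hF0, mul_one] at hdbl
  have hexp : -2 + 2*(k:ℝ)*(1-H) = -(α+2) := by rw [hα]; ring
  rw [hicc, hdbl, hexp]
  have hP : (0:ℝ) < (n:ℝ)^(α+1) := Real.rpow_pos_of_pos hn0 _
  have hsplit : (n:ℝ)^(α+2) = (n:ℝ)^(α+1) * n := by
    rw [show α+2 = (α+1)+1 by ring, Real.rpow_add_one hn0.ne']
  rw [Real.rpow_neg hn0.le, hsplit]
  field_simp
end
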